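/- arXiv:2404.08173 — 7 statements merged into one kernel-verified Lean document; each statement's English description precedes it below -/
import Mathlib

section
/- If a path P = (p_0,...,p_k) from i = p_0 to j = p_k is realized by T_{ijk}(n, i, j) (the prefix of T_{ijk}(n) up to and including (i, j, n)), then for any vertex x > j the path (p_0,...,p_k,x) is realized by T_{ijk}(n, i, x), provided the extended path is a valid path. -/
/-- The sequence `T_ijk(n)`: element at position `a·n² + b·n + c` is `(a+1, b+1, c+1)`. -/
def Tijk (n : ℕ) : List (ℕ × ℕ × ℕ) :=
  (List.range n).flatMap fun a => (List.range n).flatMap fun b =>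
    (List.range n).map fun c => (a + 1, b + 1, c + 1)

/-- The sequence `T_kij(n)`: element at position `a·n² + b·n + c` is `(b+1, c+1, a+1)`. -/
def Tkij (n : ℕ) : List (ℕ × ℕ × ℕ) :=
  (List.range n).flatMap fun a => (List.range n).flatMap fun b =>
    (List.range n).map fun c => (b + 1, c + 1, a + 1)

/-- `T_ijk(n, i, j)`: the prefix of `T_ijk(n)` up to and including the tuple `(i, j, n)`. -/
def TijkPrefix (n i j : ℕ) : List (ℕ × ℕ × ℕ) :=
  (Tijk n).take ((i - 1) * n ^ 2 + (j - 1) * n + n)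

/-- A path `P` (a list of vertices) is realized by a sequence `T` of 3-tuples:
either it has at most one edge, or some position `d` of `T` holds the tuple
`(first, last, split vertex p_x)` with both halves realized by the length-`d` prefix
(`d` here is 0-indexed, so `T.take d` is the prefix strictly before position `d`). -/
inductive Realized : List (ℕ × ℕ × ℕ) → List ℕ → Prop
  | base (T : List (ℕ × ℕ × ℕ)) (P : List ℕ) (h : P.length ≤ 2) : Realized T P
  | step (T : List (ℕ × ℕ × ℕ)) (P : List ℕ) (d x : ℕ)
      (hd : d < T.length) (hx1 : 1 ≤ x) (hx2 : x ≤ P.length - 2)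
      (ht : T.getD d default = (P.getD 0 0, P.getD (P.length - 1) 0, P.getD x 0))
      (h1 : Realized (T.take d) (P.take (x + 1)))
      (h2 : Realized (T.take d) (P.drop x)) : Realized T P

/-- A path with at least one edge, all of whose vertices lie in `[1, n]`. -/
def ValidPath (n : ℕ) (P : List ℕ) : Prop :=
  2 ≤ P.length ∧ ∀ v ∈ P, 1 ≤ v ∧ v ≤ n

/-- Increasing path. -/
def Increasing (P : List ℕ) : Prop := P.Chain' (· < ·)

/-- Decreasing path. -/
def Decreasing (P : List ℕ) : Prop := P.Chain' (· > ·)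

/-- Valley path: every interior vertex is at most the min of the endpoints. -/
def Valley (P : List ℕ) : Prop :=
  ∀ t, 1 ≤ t → t ≤ P.length - 2 →
    P.getD t 0 ≤ min (P.getD 0 0) (P.getD (P.length - 1) 0)

/-- Proper path: no two consecutive vertices `p_t, p_{t+1}` with `1 ≤ t ≤ k-2`
both exceed the min of the endpoints. -/
def Proper (P : List ℕ) : Prop :=
  ¬ ∃ t, 1 ≤ t ∧ t ≤ P.length - 3 ∧
    min (P.getD 0 0) (P.getD (P.length - 1) 0) < P.getD t 0 ∧
    min (P.getD 0 0) (P.getD (P.length - 1) 0) < P.getD (t + 1) 0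

/-- Total weight of a path: the sum of the weights of its consecutive edges. -/
def pathWeight (W : ℕ → ℕ → WithTop ℤ) (P : List ℕ) : WithTop ℤ :=
  ((P.zip P.tail).map fun q => W q.1 q.2).sum

/-- One relaxation step `A[i,j] ← min(A[i,j], A[i,k] + A[k,j])` for the tuple `(i,j,k)`. -/
def relaxStep (A : ℕ → ℕ → WithTop ℤ) (t : ℕ × ℕ × ℕ) : ℕ → ℕ → WithTop ℤ :=
  fun i j => if i = t.1 ∧ j = t.2.1 then min (A i j) (A i t.2.2 + A t.2.2 j) else A i j

/-- Apply the relaxation steps of the sequence `T` in order, starting from `A`. -/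
def relaxAll (A : ℕ → ℕ → WithTop ℤ) (T : List (ℕ × ℕ × ℕ)) : ℕ → ℕ → WithTop ℤ :=
  T.foldl relaxStep A

/-- No negative cycles on the vertex set `[1, n]`. -/
def NoNegCycle (n : ℕ) (W : ℕ → ℕ → WithTop ℤ) : Prop :=
  ∀ P : List ℕ, 2 ≤ P.length → (∀ v ∈ P, 1 ≤ v ∧ v ≤ n) →
    P.getD 0 0 = P.getD (P.length - 1) 0 → 0 ≤ pathWeight W P

theorem List.getD_mem_of_lt {α : Type*} {l : List α} {k : ℕ} {d : α} (hk : k < l.length) :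
    l.getD k d ∈ l := by
  rw [List.getD_eq_getElem _ _ hk]
  exact List.getElem_mem hk

namespace Realized

theorem mono_of_prefix {T T' : List (ℕ × ℕ × ℕ)} {P : List ℕ} (hT : T <+: T')
    (h : Realized T P) : Realized T' P := by
  obtain ⟨t, rfl⟩ := hT
  cases h with
  | base _ _ hP => exact .base _ _ hP
  | step _ _ d y hd hy1 hy2 ht h₁ h₂ =>
    refine .step _ _ d y ?_ hy1 hy2 ?_ ?_ ?_
    · simp only [List.length_append]; omega
    · rwa [List.getD_append _ _ _ _ hd]
    · rwa [List.take_append_of_le_length hd.le]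
    · rwa [List.take_append_of_le_length hd.le]

/-- Split `P ++ [y]` at the old endpoint: the right half is the single edge `(last, y)`. -/
theorem append_singleton {T : List (ℕ × ℕ × ℕ)} {P : List ℕ} {d y : ℕ} (hP : 2 ≤ P.length)
    (hT : T[d]? = some (P.getD 0 0, y, P.getD (P.length - 1) 0))
    (h : Realized (T.take d) P) : Realized T (P ++ [y]) := by
  obtain ⟨hd, hTd⟩ := List.getElem?_eq_some_iff.mp hT
  have hlen : (P ++ [y]).length = P.length + 1 := by simp
  refine .step _ _ d (P.length - 1) hd (by omega) (by omega) ?_ ?_ (.base _ _ ?_)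
  · have hfirst : (P ++ [y]).getD 0 0 = P.getD 0 0 := List.getD_append _ _ _ _ (by omega)
    have hsplit : (P ++ [y]).getD (P.length - 1) 0 = P.getD (P.length - 1) 0 :=
      List.getD_append _ _ _ _ (by omega)
    have hlast : (P ++ [y]).getD ((P ++ [y]).length - 1) 0 = y := by
      rw [hlen, Nat.add_sub_cancel, List.getD_append_right _ _ _ _ le_rfl, Nat.sub_self]
      rfl
    rw [List.getD_eq_getElem _ _ hd, hTd, hfirst, hsplit, hlast]
  · rwa [Nat.sub_add_cancel (by omega), List.take_left]
  · rw [List.length_drop, hlen]; omega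

end Realized

theorem List.getElem?_flatMap_of_forall_length_eq {α β : Type*} {l : List α} {f : α → List β}
    {L : ℕ} (hf : ∀ a ∈ l, (f a).length = L) {q r : ℕ} (hr : r < L) :
    (l.flatMap f)[q * L + r]? = l[q]?.bind fun a => (f a)[r]? := by
  induction l generalizing q with
  | nil => simp
  | cons a t ih =>
    have ha : (f a).length = L := hf a List.mem_cons_self
    rw [List.flatMap_cons]
    cases q with
    | zero => simpa using List.getElem?_append_left (by omega)
    | succ q =>
      rw [List.getElem?_append_right (by rw [ha]; nlinarith),
        show (q + 1) * L + r - (f a).length = q * L + r by rw [ha]; ring_nf; omega,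
        ih fun b hb => hf b (List.mem_cons_of_mem a hb)]
      simp

theorem Tijk_getElem? {n a b c : ℕ} (ha : a < n) (hb : b < n) (hc : c < n) :
    (Tijk n)[a * n ^ 2 + b * n + c]? = some (a + 1, b + 1, c + 1) := by
  have hblock : ∀ a' ∈ List.range n, ((List.range n).flatMap fun b =>
      (List.range n).map fun c => (a' + 1, b + 1, c + 1)).length = n ^ 2 := by
    intro a' _
    simp [List.length_flatMap, List.map_const', sq]
  rw [Tijk, add_assoc, List.getElem?_flatMap_of_forall_length_eq hblock (by nlinarith),
    List.getElem?_range ha, Option.bind_some,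
    List.getElem?_flatMap_of_forall_length_eq (by simp) hc]
  simp [List.getElem?_range hb, List.getElem?_range hc]

theorem TijkPrefix_getElem? {n i j k : ℕ} (hi : 1 ≤ i ∧ i ≤ n) (hj : 1 ≤ j ∧ j ≤ n)
    (hk : 1 ≤ k ∧ k ≤ n) :
    (TijkPrefix n i j)[(i - 1) * n ^ 2 + (j - 1) * n + (k - 1)]? = some (i, j, k) := by
  rw [TijkPrefix, List.getElem?_take_of_lt (by omega),
    Tijk_getElem? (by omega) (by omega) (by omega)]
  congr <;> omega

theorem TijkPrefix_prefix_take {n i j x : ℕ} (hj : 1 ≤ j) (hjx : j < x) (k : ℕ) :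
    TijkPrefix n i j <+: (TijkPrefix n i x).take ((i - 1) * n ^ 2 + (x - 1) * n + k) := by
  have hjn : (j - 1) * n + n ≤ (x - 1) * n := by
    rw [← Nat.succ_mul, Nat.succ_eq_add_one, Nat.sub_add_cancel hj]
    exact Nat.mul_le_mul_right n (by omega)
  rw [TijkPrefix, TijkPrefix, List.take_take]
  exact List.take_prefix_take_left (le_min (by omega) (by omega))

/-- If a path from `i` to `j` is realized by `T_ijk(n, i, j)`, then for any vertex
`x > j` (with `x ∈ [1,n]` so the extended path is valid), the path extended by `x`
is realized by `T_ijk(n, i, x)`. -/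
theorem stmt3 (n i j x : ℕ) (P : List ℕ) (hP : ValidPath n P)
    (hi : P.getD 0 0 = i) (hj : P.getD (P.length - 1) 0 = j)
    (hjx : j < x) (hx1 : 1 ≤ x) (hxn : x ≤ n)
    (h : Realized (TijkPrefix n i j) P) :
    Realized (TijkPrefix n i x) (P ++ [x]) := by
  obtain ⟨hlen, hvert⟩ := hP
  have hiP : 1 ≤ i ∧ i ≤ n := hi ▸ hvert _ (List.getD_mem_of_lt (by omega))
  have hjP : 1 ≤ j ∧ j ≤ n := hj ▸ hvert _ (List.getD_mem_of_lt (by omega))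
  refine Realized.append_singleton hlen ?_
    (h.mono_of_prefix (TijkPrefix_prefix_take hjP.1 hjx (j - 1)))
  rw [hi, hj]
  exact TijkPrefix_getElem? hiP ⟨hx1, hxn⟩ hjP
end

section
/- A nonempty simple path P = (p_0,...,p_k) on vertex set [1,n] is realized by T_{ijk}(n) if and only if: either p_0 < p_k and there exists 0 ≤ i ≤ k such that (p_0,...,p_i) is proper (or i = 0), (p_i,...,p_k) is increasing (or i = k), and p_i ≥ p_0; or p_0 > p_k and there exists 0 ≤ i ≤ k such that (p_0,...,p_i) is decreasing (or i = 0), (p_i,...,p_k) is proper (or i = k), and p_i ≥ p_k. -/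
/-!
Since `Tijk n` lists the triples in lexicographic order, a path `(p_l, …, p_r)` with at least
three vertices is realized iff it splits at an interior vertex `p_x` such that each half is
either a single edge or realized before the tuple `(p_l, p_r, p_x)`, i.e. by some tuple
`(p_l, p_x, _)` resp. `(p_x, p_r, _)` that comes lexicographically earlier; for distinct vertices
this means `p_x < p_r` resp. `p_x < p_l`.

The shapes on the right-hand side obey the same recursion. A shaped path splits at its
penultimate vertex if it ends with an increasing run, at its second vertex if it starts with a
decreasing run, and otherwise (when it is proper) at the highest interior vertex below both
endpoints. Conversely, two shaped halves meeting at a vertex below both ends glue to a shaped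
path, whose proper part reaches up to where the monotone run at the higher endpoint climbs above
the lower endpoint. Induction on the length of the segment concludes.
-/

open Set

namespace List

variable {α : Type*} {L : List α} {a : α} {i j l r x : ℕ}

theorem getD_take_of_lt (h : i < j) : (L.take j).getD i a = L.getD i a := by
  simp only [getD_eq_getElem?_getD, getElem?_take_of_lt h]

theorem Nodup.injOn_getD (h : L.Nodup) : InjOn (L.getD · a) (Iio L.length) :=
  fun s hs t ht hst => by
    rw [mem_Iio] at hs ht
    simp only [getD_eq_getElem _ _ hs, getD_eq_getElem _ _ ht] at hst
    exact h.getElem_inj_iff.mp hst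

def segment (L : List α) (l r : ℕ) : List α := (L.take (r + 1)).drop l

theorem length_segment (hr : r < L.length) : (L.segment l r).length = r + 1 - l := by
  simp [segment]
  omega

theorem getD_segment (h : l + i ≤ r) : (L.segment l r).getD i a = L.getD (l + i) a := by
  simp [segment, getD_eq_getElem?_getD, getElem?_take_of_lt (show l + i < r + 1 by omega)]

theorem getD_segment_zero (h : l ≤ r) : (L.segment l r).getD 0 a = L.getD l a := by
  rw [getD_segment (by omega), Nat.add_zero]

theorem getD_segment_length_sub_one (h : l ≤ r) (hr : r < L.length) :
    (L.segment l r).getD ((L.segment l r).length - 1) a = L.getD r a := by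
  rw [length_segment hr, getD_segment (by omega)]
  congr 1
  omega

theorem take_segment (h : l + x ≤ r) : (L.segment l r).take (x + 1) = L.segment l (l + x) := by
  simp [segment, take_drop, take_take]
  congr 2
  omega

theorem drop_segment : (L.segment l r).drop x = L.segment (l + x) r := by
  simp [segment, drop_drop]

theorem segment_zero : L.segment 0 i = L.take (i + 1) := by
  simp [segment]

theorem segment_length_sub_one : L.segment i (L.length - 1) = L.drop i := by
  simp [segment, take_of_length_le (show L.length ≤ L.length - 1 + 1 by omega)]

theorem isChain_segment_iff {R : α → α → Prop} (hr : r < L.length) :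
    (L.segment l r).IsChain R ↔
      ∀ t, l ≤ t → t < r → R (L.getD t a) (L.getD (t + 1) a) := by
  have hlen := length_segment (l := l) hr
  rw [isChain_iff_getElem]
  constructor
  · intro h t ht₁ ht₂
    have := h (t - l) (by omega)
    rwa [← getD_eq_getElem _ a, ← getD_eq_getElem _ a, getD_segment (by omega),
      getD_segment (by omega), show l + (t - l) = t by omega,
      show l + (t - l + 1) = t + 1 by omega] at this
  · intro h t ht
    rw [← getD_eq_getElem _ a, ← getD_eq_getElem _ a, getD_segment (by omega),
      getD_segment (by omega)]
    exact h (l + t) (by omega) (by omega)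

end List

def tripleLex (t : ℕ × ℕ × ℕ) : ℕ ×ₗ ℕ ×ₗ ℕ := toLex (t.1, toLex t.2)

theorem tripleLex_lt_tripleLex_iff {a b c a' b' c' : ℕ} :
    tripleLex (a, b, c) < tripleLex (a', b', c') ↔
      a < a' ∨ a = a' ∧ (b < b' ∨ b = b' ∧ c < c') := by
  simp [tripleLex, Prod.Lex.toLex_lt_toLex]

theorem mem_Tijk {n u v w : ℕ} (hu : 1 ≤ u ∧ u ≤ n) (hv : 1 ≤ v ∧ v ≤ n)
    (hw : 1 ≤ w ∧ w ≤ n) : (u, v, w) ∈ Tijk n := by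
  simp only [Tijk, List.mem_flatMap, List.mem_map, List.mem_range]
  exact ⟨u - 1, by omega, v - 1, by omega, w - 1, by omega, by grind⟩

theorem sortedLT_map_tripleLex_Tijk (n : ℕ) : ((Tijk n).map tripleLex).SortedLT := by
  refine List.Pairwise.sortedLT ?_
  simp only [Tijk, List.pairwise_flatMap, List.pairwise_map, List.mem_flatMap, List.mem_map,
    List.mem_range, tripleLex, Prod.Lex.toLex_lt_toLex]
  exact ⟨fun _ _ => ⟨fun _ _ => List.pairwise_lt_range.imp (by grind),
    List.pairwise_lt_range.imp (by grind)⟩, List.pairwise_lt_range.imp (by grind)⟩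

section Realized

variable {T T' : List (ℕ × ℕ × ℕ)} {R : List ℕ} {d : ℕ}

theorem tripleLex_getD_lt_tripleLex_getD_iff (hT : (T.map tripleLex).SortedLT) {i j : ℕ}
    (hi : i < T.length) (hj : j < T.length) :
    tripleLex (T.getD i default) < tripleLex (T.getD j default) ↔ i < j := by
  have := hT.strictMono_get.lt_iff_lt (a := ⟨i, by simpa⟩) (b := ⟨j, by simpa⟩)
  rw [List.getD_eq_getElem _ _ hi, List.getD_eq_getElem _ _ hj]
  simpa using this

theorem Realized.of_isPrefix (h : Realized T R) (hT : T <+: T') : Realized T' R := by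
  cases h with
  | base _ _ h => exact .base _ _ h
  | step _ _ d x hd hx₁ hx₂ ht h₁ h₂ =>
    obtain ⟨s, rfl⟩ := hT
    have htake : (T ++ s).take d = T.take d := List.take_append_of_le_length hd.le
    refine .step _ _ d x (by simp; omega) hx₁ hx₂ ?_ (htake ▸ h₁) (htake ▸ h₂)
    rwa [List.getD_append _ _ _ _ hd]

theorem Realized.exists_lt_of_take (hT : (T.map tripleLex).SortedLT) (hd : d < T.length)
    (h : Realized (T.take d) R) (hR : 3 ≤ R.length) :
    ∃ c, tripleLex (R.getD 0 0, R.getD (R.length - 1) 0, c) < tripleLex (T.getD d default) := by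
  cases h with
  | base _ _ h => omega
  | step _ _ d' x hd' _ _ ht _ _ =>
    have hd'd : d' < d := by simp at hd'; omega
    rw [List.getD_take_of_lt hd'd] at ht
    exact ⟨R.getD x 0, ht ▸ (tripleLex_getD_lt_tripleLex_getD_iff hT (by omega) hd).mpr hd'd⟩

theorem Realized.take_of_lt (hT : (T.map tripleLex).SortedLT) (hd : d < T.length)
    (h : Realized T R)
    (hlt : ∀ c, tripleLex (R.getD 0 0, R.getD (R.length - 1) 0, c) <
      tripleLex (T.getD d default)) :
    Realized (T.take d) R := by
  cases h with
  | base _ _ h => exact .base _ _ h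
  | step _ _ d' x hd' hx₁ hx₂ ht h₁ h₂ =>
    have hd'd : d' < d := (tripleLex_getD_lt_tripleLex_getD_iff hT hd' hd).mp (ht ▸ hlt _)
    refine .step _ _ d' x (by simp; omega) hx₁ hx₂ ?_ ?_ ?_
    · rwa [List.getD_take_of_lt hd'd]
    · rwa [List.take_take, min_eq_left hd'd.le]
    · rwa [List.take_take, min_eq_left hd'd.le]

end Realized

section Shape

variable {p : ℕ → ℕ} {θ θ' l r l' r' i j x : ℕ}

theorem strictMonoOn_Icc_iff_lt_add_one :
    StrictMonoOn p (Icc l r) ↔ ∀ t, l ≤ t → t < r → p t < p (t + 1) := by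
  refine ⟨fun h t ht₁ ht₂ => h ⟨ht₁, ht₂.le⟩ ⟨by omega, ht₂⟩ t.lt_succ_self, fun h => ?_⟩
  refine strictMonoOn_of_lt_succ ordConnected_Icc fun t _ ht ht' => ?_
  rw [Order.succ_eq_add_one] at ht' ⊢
  exact h t ht.1 (by grind)

theorem strictAntiOn_Icc_iff_lt_add_one :
    StrictAntiOn p (Icc l r) ↔ ∀ t, l ≤ t → t < r → p (t + 1) < p t := by
  refine ⟨fun h t ht₁ ht₂ => h ⟨ht₁, ht₂.le⟩ ⟨by omega, ht₂⟩ t.lt_succ_self, fun h => ?_⟩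
  refine strictAntiOn_of_succ_lt ordConnected_Icc fun t _ ht ht' => ?_
  rw [Order.succ_eq_add_one] at ht' ⊢
  exact h t ht.1 (by grind)

theorem StrictMonoOn.Icc_extend_right (h : StrictMonoOn p (Icc l r)) (hr : p r < p (r + 1)) :
    StrictMonoOn p (Icc l (r + 1)) := by
  rw [strictMonoOn_Icc_iff_lt_add_one] at h ⊢
  intro t ht₁ ht₂
  rcases Nat.lt_succ_iff_lt_or_eq.mp ht₂ with ht | rfl
  exacts [h t ht₁ ht, hr]

theorem StrictAntiOn.Icc_extend_left (h : StrictAntiOn p (Icc (l + 1) r))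
    (hl : p (l + 1) < p l) : StrictAntiOn p (Icc l r) := by
  rw [strictAntiOn_Icc_iff_lt_add_one] at h ⊢
  intro t ht₁ ht₂
  rcases eq_or_lt_of_le ht₁ with rfl | ht
  exacts [hl, h t ht ht₂]

/-- A path is proper iff it is isolated above the smaller of its endpoints
(`proper_segment_iff`). -/
def IsolatedAbove (p : ℕ → ℕ) (θ l r : ℕ) : Prop :=
  ∀ t, l < t → t + 1 < r → p t ≤ θ ∨ p (t + 1) ≤ θ

/-- The right-hand side of the characterization, for the segment `p l, …, p r`. -/
def IjkShape (p : ℕ → ℕ) (l r : ℕ) : Prop :=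
  (p l < p r ∧ ∃ i ∈ Icc l r,
    IsolatedAbove p (p l) l i ∧ StrictMonoOn p (Icc i r) ∧ p l ≤ p i) ∨
  (p r < p l ∧ ∃ i ∈ Icc l r,
    StrictAntiOn p (Icc l i) ∧ IsolatedAbove p (p r) i r ∧ p r ≤ p i)

/-- The pattern of a `Realized.step` at `x`, where `Q a b` stands for "the segment from `a`
to `b` is realized". -/
def SplitAt (Q : ℕ → ℕ → Prop) (p : ℕ → ℕ) (l x r : ℕ) : Prop :=
  l < x ∧ x < r ∧ (x = l + 1 ∨ p x < p r ∧ Q l x) ∧ (x + 1 = r ∨ p x < p l ∧ Q x r)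

theorem IsolatedAbove.mono (h : IsolatedAbove p θ l r) (hθ : θ ≤ θ') (hl : l ≤ l')
    (hr : r' ≤ r) : IsolatedAbove p θ' l' r' := fun t ht₁ ht₂ => by
  have := h t (by omega) (by omega)
  omega

theorem isolatedAbove_of_le_add_two (h : r ≤ l + 2) : IsolatedAbove p θ l r :=
  fun t ht₁ ht₂ => by omega

theorem IsolatedAbove.append (h₁ : IsolatedAbove p θ l x) (h₂ : IsolatedAbove p θ x r)
    (hx : p x ≤ θ) : IsolatedAbove p θ l r := fun t ht₁ ht₂ => by
  rcases lt_trichotomy (t + 1) x with hlt | heq | hgt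
  · exact h₁ t ht₁ hlt
  · exact .inr (heq ▸ hx)
  · rcases eq_or_lt_of_le (Nat.lt_succ_iff.mp hgt) with rfl | hxt
    · exact .inl hx
    · exact h₂ t hxt ht₂

theorem ijkShape_of_le_add_two (hne : p l ≠ p r) (hlr : l ≤ r) (h : r ≤ l + 2) :
    IjkShape p l r := by
  rcases hne.lt_or_gt with hlt | hgt
  · exact .inl ⟨hlt, r, ⟨hlr, le_rfl⟩, isolatedAbove_of_le_add_two h, by simp, hlt.le⟩
  · exact .inr ⟨hgt, l, ⟨le_rfl, hlr⟩, by simp, isolatedAbove_of_le_add_two h, hgt.le⟩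

theorem ijkShape_of_decreasing_isolated_increasing_of_lt (hlr : p l < p r)
    (hdec : StrictAntiOn p (Icc l i)) (hiso : IsolatedAbove p (p l) i j)
    (hinc : StrictMonoOn p (Icc j r)) (hlj : l ≤ j) (hjr : j ≤ r) : IjkShape p l r := by
  let P s := j ≤ s ∧ p l < p s
  have hex : ∃ s, P s := ⟨r, hjr, hlr⟩
  obtain ⟨hjI, hlI⟩ := Nat.find_spec hex
  have hIr : Nat.find hex ≤ r := Nat.find_min' hex ⟨hjr, hlr⟩
  refine .inl ⟨hlr, Nat.find hex, ⟨by omega, hIr⟩, fun t ht₁ ht₂ => ?_,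
    hinc.mono (Icc_subset_Icc_left hjI), hlI.le⟩
  by_cases hti : t ≤ i
  · exact .inl (hdec ⟨le_rfl, by omega⟩ ⟨by omega, hti⟩ ht₁).le
  by_cases htj : j ≤ t + 1
  · exact .inr (not_lt.mp fun h => Nat.find_min hex ht₂ ⟨htj, h⟩)
  · exact hiso t (by omega) (by omega)

theorem ijkShape_of_decreasing_isolated_increasing_of_gt (hrl : p r < p l)
    (hdec : StrictAntiOn p (Icc l i)) (hiso : IsolatedAbove p (p r) i j)
    (hinc : StrictMonoOn p (Icc j r)) (hli : l ≤ i) (hir : i ≤ r) : IjkShape p l r := by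
  let P s := l ≤ s ∧ p r < p s
  obtain ⟨hlI, hrI⟩ : P (Nat.findGreatest P i) := Nat.findGreatest_spec hli ⟨le_rfl, hrl⟩
  have hIi : Nat.findGreatest P i ≤ i := Nat.findGreatest_le i
  refine .inr ⟨hrl, Nat.findGreatest P i, ⟨hlI, by omega⟩,
    hdec.mono (Icc_subset_Icc_right hIi), fun t ht₁ ht₂ => ?_, hrI.le⟩
  by_cases hti : t ≤ i
  · exact .inl (not_lt.mp fun h => Nat.findGreatest_is_greatest ht₁ hti ⟨by omega, h⟩)
  by_cases htj : j ≤ t + 1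
  · exact .inr (hinc ⟨htj, by omega⟩ ⟨by omega, le_rfl⟩ ht₂).le
  · exact hiso t (by omega) (by omega)

theorem ijkShape_of_valley (hne : p l ≠ p r) (hl : IjkShape p l x) (hr : IjkShape p x r)
    (hxl : p x < p l) (hxr : p x < p r) : IjkShape p l r := by
  obtain ⟨hlx, -⟩ | ⟨-, i, hi, hdec, hiso₁, -⟩ := hl
  · omega
  obtain ⟨-, j, hj, hiso₂, hinc, -⟩ | ⟨hrx, -⟩ := hr
  swap
  · omega
  have hiso : IsolatedAbove p (p x) i j := hiso₁.append hiso₂ le_rfl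
  rcases hne.lt_or_gt with hlt | hgt
  · exact ijkShape_of_decreasing_isolated_increasing_of_lt hlt hdec
      (hiso.mono hxl.le le_rfl le_rfl) hinc (by grind) hj.2
  · exact ijkShape_of_decreasing_isolated_increasing_of_gt hgt hdec
      (hiso.mono hxr.le le_rfl le_rfl) hinc hi.1 (by grind)

theorem exists_splitAt_of_isolatedAbove (hinj : InjOn p (Icc l r)) (hlr : l + 3 ≤ r)
    (hiso : IsolatedAbove p (min (p l) (p r)) l r) : ∃ x, SplitAt (IjkShape p) p l x r := by
  have hne : ∀ t, l < t → t < r → p t ≠ p l ∧ p t ≠ p r := fun t ht₁ ht₂ =>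
    ⟨(hinj.ne_iff ⟨ht₁.le, ht₂.le⟩ ⟨le_rfl, by omega⟩).mpr (by omega),
     (hinj.ne_iff ⟨ht₁.le, ht₂.le⟩ ⟨by omega, le_rfl⟩).mpr (by omega)⟩
  set S := (Finset.Ioo l r).filter (fun t => p t < min (p l) (p r))
  have hS : S.Nonempty := by
    have := hne (l + 1) (by omega) (by omega)
    have := hne (l + 1 + 1) (by omega) (by omega)
    rcases hiso (l + 1) (by omega) (by omega) with h | h
    · exact ⟨l + 1, by simp [S]; omega⟩
    · exact ⟨l + 1 + 1, by simp [S]; omega⟩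
  -- the valley: the highest interior vertex below both endpoints
  obtain ⟨x, hxS, hmax⟩ := S.exists_max_image p hS
  simp only [S, Finset.mem_filter, Finset.mem_Ioo] at hxS hmax
  obtain ⟨⟨hlx, hxr⟩, hxμ⟩ := hxS
  have hiso' : IsolatedAbove p (p x) l r := fun t ht₁ ht₂ => by
    have := hne t ht₁ (by omega)
    have := hne (t + 1) (by omega) ht₂
    rcases hiso t ht₁ ht₂ with h | h
    · exact .inl (hmax t ⟨⟨ht₁, by omega⟩, by omega⟩)
    · exact .inr (hmax (t + 1) ⟨⟨by omega, ht₂⟩, by omega⟩)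
  refine ⟨x, hlx, hxr, .inr ⟨by omega, .inr ⟨by omega, l, ⟨le_rfl, hlx.le⟩, by simp,
    hiso'.mono le_rfl le_rfl hxr.le, by omega⟩⟩, .inr ⟨by omega, .inl ⟨by omega, r,
    ⟨hxr.le, le_rfl⟩, hiso'.mono le_rfl hlx.le le_rfl, by simp, by omega⟩⟩⟩

theorem exists_splitAt_of_ijkShape (hinj : InjOn p (Icc l r)) (hlr : l + 2 ≤ r)
    (h : IjkShape p l r) : ∃ x, SplitAt (IjkShape p) p l x r := by
  rcases eq_or_lt_of_le hlr with rfl | hlr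
  · exact ⟨l + 1, by omega, by omega, .inl rfl, .inl rfl⟩
  rcases h with ⟨hlr', i, hi, hiso, hinc, hli⟩ | ⟨hrl, i, hi, hdec, hiso, hri⟩
  · rcases eq_or_lt_of_le hi.2 with rfl | hir
    · exact exists_splitAt_of_isolatedAbove hinj hlr (by rwa [min_eq_left hlr'.le])
    have hne : p l ≠ p (r - 1) :=
      (hinj.ne_iff ⟨le_rfl, by omega⟩ ⟨by omega, by omega⟩).mpr (by omega)
    have hle : p i ≤ p (r - 1) :=
      hinc.monotoneOn ⟨le_rfl, hir.le⟩ ⟨by omega, by omega⟩ (by omega)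
    have hlt : p (r - 1) < p r := hinc ⟨by omega, by omega⟩ ⟨hir.le, le_rfl⟩ (by omega)
    refine ⟨r - 1, by omega, by omega, .inr ⟨hlt, .inl ⟨by omega, i, ⟨hi.1, by omega⟩,
      hiso, hinc.mono (Icc_subset_Icc_right (by omega)), hli⟩⟩, .inl (by omega)⟩
  · rcases eq_or_lt_of_le hi.1 with rfl | hli
    · exact exists_splitAt_of_isolatedAbove hinj hlr (by rwa [min_eq_right hrl.le])
    have hne : p (l + 1) ≠ p r :=
      (hinj.ne_iff ⟨by omega, by omega⟩ ⟨by omega, le_rfl⟩).mpr (by omega)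
    have hle : p i ≤ p (l + 1) :=
      hdec.antitoneOn ⟨by omega, by omega⟩ ⟨hli.le, le_rfl⟩ (by omega)
    have hlt : p (l + 1) < p l := hdec ⟨le_rfl, by omega⟩ ⟨by omega, by omega⟩ (by omega)
    refine ⟨l + 1, by omega, by omega, .inl rfl, .inr ⟨hlt, .inr ⟨by omega, i,
      ⟨by omega, hi.2⟩, hdec.mono (Icc_subset_Icc_left (by omega)), hiso, hri⟩⟩⟩

theorem SplitAt.ijkShape (hinj : InjOn p (Icc l r)) (h : SplitAt (IjkShape p) p l x r) :
    IjkShape p l r := by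
  obtain ⟨hlx, hxr, H₁, H₂⟩ := h
  have hne {s t} (hs : s ∈ Icc l r) (ht : t ∈ Icc l r) (hst : s ≠ t) : p s ≠ p t :=
    (hinj.ne_iff hs ht).mpr hst
  have hlr : p l ≠ p r := hne ⟨le_rfl, by omega⟩ ⟨by omega, le_rfl⟩ (by omega)
  have hpxl_ne : p x ≠ p l := hne ⟨hlx.le, hxr.le⟩ ⟨le_rfl, by omega⟩ (by omega)
  have hpxr_ne : p x ≠ p r := hne ⟨hlx.le, hxr.le⟩ ⟨by omega, le_rfl⟩ (by omega)
  rcases H₁ with rfl | ⟨hpxr, hl⟩ <;> rcases H₂ with rfl | ⟨hpxl, hr⟩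
  · exact ijkShape_of_le_add_two hlr (by omega) le_rfl
  · rcases hr with hr' | ⟨hrx, j, hj, hdec, hiso, hrj⟩
    · exact ijkShape_of_valley hlr (ijkShape_of_le_add_two hpxl_ne.symm (by omega) (by omega))
        (.inl hr') hpxl hr'.1
    · exact .inr ⟨by omega, j, ⟨(Nat.le_succ l).trans hj.1, hj.2⟩,
        hdec.Icc_extend_left hpxl, hiso, hrj⟩
  · rcases hl with ⟨hlx', i, hi, hiso, hinc, hli⟩ | hl'
    · exact .inl ⟨by omega, i, ⟨hi.1, hi.2.trans (Nat.le_succ x)⟩, hiso,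
        hinc.Icc_extend_right hpxr, hli⟩
    · exact ijkShape_of_valley hlr (.inr hl')
        (ijkShape_of_le_add_two hpxr_ne (by omega) (by omega)) hl'.1 hpxr
  · exact ijkShape_of_valley hlr hl hr hpxl hpxr

theorem ijkShape_iff_exists_splitAt (hinj : InjOn p (Icc l r)) (hlr : l + 2 ≤ r) :
    IjkShape p l r ↔ ∃ x, SplitAt (IjkShape p) p l x r :=
  ⟨exists_splitAt_of_ijkShape hinj hlr, fun ⟨_, h⟩ => h.ijkShape hinj⟩

end Shape

section Segment

variable {n : ℕ} {P : List ℕ} {l r x : ℕ}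

theorem exists_splitAt_of_realized_segment (hnd : P.Nodup) (hlr : l + 2 ≤ r)
    (hr : r < P.length) (h : Realized (Tijk n) (P.segment l r)) :
    ∃ x, SplitAt (fun a b => Realized (Tijk n) (P.segment a b)) (P.getD · 0) l x r := by
  have hT := sortedLT_map_tripleLex_Tijk n
  have hlen := List.length_segment (l := l) hr
  have hne {s t} (hs : s < P.length) (ht : t < P.length) (hst : s ≠ t) :
      P.getD s 0 ≠ P.getD t 0 :=
    (hnd.injOn_getD.ne_iff hs ht).mpr hst
  cases h with
  | base _ _ h => omega
  | step _ _ d x hd hx₁ hx₂ ht h₁ h₂ =>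
    rw [List.take_segment (by omega)] at h₁
    rw [List.drop_segment] at h₂
    rw [List.getD_segment_zero (by omega), List.getD_segment_length_sub_one (by omega) hr,
      List.getD_segment (by omega)] at ht
    refine ⟨l + x, by omega, by omega, ?_, ?_⟩ <;> beta_reduce
    · rcases eq_or_ne x 1 with rfl | hx
      · exact .inl rfl
      obtain ⟨c, hc⟩ := h₁.exists_lt_of_take hT hd (by rw [List.length_segment] <;> omega)
      rw [ht, List.getD_segment_zero (by omega),
        List.getD_segment_length_sub_one (by omega) (by omega), tripleLex_lt_tripleLex_iff] at hc
      have := hne (s := l + x) (t := r) (by omega) hr (by omega)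
      exact .inr ⟨by omega, h₁.of_isPrefix (List.take_prefix _ _)⟩
    · rcases eq_or_ne (l + x + 1) r with hx | hx
      · exact .inl hx
      obtain ⟨c, hc⟩ := h₂.exists_lt_of_take hT hd (by rw [List.length_segment] <;> omega)
      rw [ht, List.getD_segment_zero (by omega),
        List.getD_segment_length_sub_one (by omega) hr, tripleLex_lt_tripleLex_iff] at hc
      have := hne (s := l + x) (t := l) (by omega) (by omega) (by omega)
      exact .inr ⟨by omega, h₂.of_isPrefix (List.take_prefix _ _)⟩

theorem realized_segment_of_splitAt (hval : ∀ v ∈ P, 1 ≤ v ∧ v ≤ n) (hr : r < P.length)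
    (h : SplitAt (fun a b => Realized (Tijk n) (P.segment a b)) (P.getD · 0) l x r) :
    Realized (Tijk n) (P.segment l r) := by
  obtain ⟨hlx, hxr, H₁, H₂⟩ := h
  beta_reduce at H₁ H₂
  have hT := sortedLT_map_tripleLex_Tijk n
  have hlen := List.length_segment (l := l) hr
  have hmem {t} (ht : t < P.length) : 1 ≤ P.getD t 0 ∧ P.getD t 0 ≤ n :=
    hval _ (by rw [List.getD_eq_getElem _ _ ht]; exact List.getElem_mem ht)
  obtain ⟨d, hd, hdx⟩ := List.getElem_of_mem
    (mem_Tijk (hmem (t := l) (by omega)) (hmem hr) (hmem (t := x) (by omega)))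
  have ht : (Tijk n).getD d default = (P.getD l 0, P.getD r 0, P.getD x 0) := by
    rw [List.getD_eq_getElem _ _ hd, hdx]
  refine .step _ _ d (x - l) hd (by omega) (by omega) ?_ ?_ ?_
  · rw [List.getD_segment_zero (by omega), List.getD_segment_length_sub_one (by omega) hr,
      List.getD_segment (by omega), show l + (x - l) = x by omega, ht]
  · rw [List.take_segment (by omega), show l + (x - l) = x by omega]
    rcases H₁ with rfl | ⟨hlt, hR⟩
    · exact .base _ _ (by rw [List.length_segment] <;> omega)
    · refine hR.take_of_lt hT hd fun c => ?_
      rw [ht, List.getD_segment_zero (by omega),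
        List.getD_segment_length_sub_one (by omega) (by omega), tripleLex_lt_tripleLex_iff]
      omega
  · rw [List.drop_segment, show l + (x - l) = x by omega]
    rcases H₂ with rfl | ⟨hlt, hR⟩
    · exact .base _ _ (by rw [List.length_segment] <;> omega)
    · refine hR.take_of_lt hT hd fun c => ?_
      rw [ht, List.getD_segment_zero (by omega),
        List.getD_segment_length_sub_one (by omega) hr, tripleLex_lt_tripleLex_iff]
      omega

theorem realized_segment_iff (hval : ∀ v ∈ P, 1 ≤ v ∧ v ≤ n) (hnd : P.Nodup)
    (hlr : l < r) (hr : r < P.length) :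
    Realized (Tijk n) (P.segment l r) ↔ IjkShape (P.getD · 0) l r := by
  induction hk : r - l using Nat.strong_induction_on generalizing l r with
  | _ k ih =>
  have hinj : InjOn (P.getD · 0) (Icc l r) :=
    hnd.injOn_getD.mono fun t ht => by simp only [mem_Icc, mem_Iio] at ht ⊢; omega
  rcases eq_or_lt_of_le (Nat.succ_le_of_lt hlr) with rfl | hlr'
  · refine iff_of_true (.base _ _ (by rw [List.length_segment hr]; omega))
      (ijkShape_of_le_add_two ?_ hlr.le (by omega))
    exact (hinj.ne_iff ⟨le_rfl, hlr.le⟩ ⟨hlr.le, le_rfl⟩).mpr hlr.ne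
  have hsplit (x : ℕ) :
      SplitAt (fun a b => Realized (Tijk n) (P.segment a b)) (P.getD · 0) l x r ↔
        SplitAt (IjkShape (P.getD · 0)) (P.getD · 0) l x r :=
    and_congr_right fun hlx => and_congr_right fun hxr => and_congr
      (or_congr_right (and_congr_right fun _ => ih _ (by omega) hlx (by omega) rfl))
      (or_congr_right (and_congr_right fun _ => ih _ (by omega) hxr hr rfl))
  rw [ijkShape_iff_exists_splitAt hinj hlr']
  exact ⟨fun h => (exists_splitAt_of_realized_segment hnd hlr' hr h).imp fun x => (hsplit x).mp,
    fun ⟨x, hx⟩ => realized_segment_of_splitAt hval hr ((hsplit x).mpr hx)⟩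

end Segment

section Translation

variable {P : List ℕ} {i l r : ℕ}

theorem proper_segment_iff (hlr : l ≤ r) (hr : r < P.length) :
    Proper (P.segment l r) ↔ IsolatedAbove (P.getD · 0) (min (P.getD l 0) (P.getD r 0)) l r := by
  have hlen := List.length_segment (l := l) hr
  rw [Proper, List.getD_segment_zero hlr, List.getD_segment_length_sub_one hlr hr]
  constructor
  · intro h t ht₁ ht₂
    by_contra! hc
    refine h ⟨t - l, by omega, by omega, ?_, ?_⟩
    · rw [List.getD_segment (by omega), show l + (t - l) = t by omega]
      exact hc.1
    · rw [List.getD_segment (by omega), show l + (t - l + 1) = t + 1 by omega]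
      exact hc.2
  · rintro h ⟨t, ht₁, ht₂, h₁, h₂⟩
    rw [List.getD_segment (by omega)] at h₁ h₂
    rcases h (l + t) (by omega) (by omega) with h' | h'
    exacts [not_le.mpr h₁ h', not_le.mpr h₂ h']

theorem increasing_segment_iff (hr : r < P.length) :
    Increasing (P.segment l r) ↔ StrictMonoOn (P.getD · 0) (Icc l r) :=
  (List.isChain_segment_iff (a := 0) hr).trans strictMonoOn_Icc_iff_lt_add_one.symm

theorem decreasing_segment_iff (hr : r < P.length) :
    Decreasing (P.segment l r) ↔ StrictAntiOn (P.getD · 0) (Icc l r) :=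
  (List.isChain_segment_iff (a := 0) hr).trans
    (strictAntiOn_Icc_iff_lt_add_one (p := (P.getD · 0))).symm

theorem or_proper_take_iff (hi : i < P.length) :
    (i = 0 ∨ Proper (P.take (i + 1))) ↔
      IsolatedAbove (P.getD · 0) (min (P.getD 0 0) (P.getD i 0)) 0 i := by
  rw [← List.segment_zero, proper_segment_iff (Nat.zero_le i) hi]
  exact or_iff_right_of_imp fun h => isolatedAbove_of_le_add_two (by omega)

theorem or_decreasing_take_iff (hi : i < P.length) :
    (i = 0 ∨ Decreasing (P.take (i + 1))) ↔ StrictAntiOn (P.getD · 0) (Icc 0 i) := by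
  rw [← List.segment_zero, decreasing_segment_iff hi]
  exact or_iff_right_of_imp fun h => by simp [h]

theorem or_proper_drop_iff (hi : i < P.length) :
    (i = P.length - 1 ∨ Proper (P.drop i)) ↔
      IsolatedAbove (P.getD · 0) (min (P.getD i 0) (P.getD (P.length - 1) 0)) i
        (P.length - 1) := by
  rw [← List.segment_length_sub_one, proper_segment_iff (by omega) (by omega)]
  exact or_iff_right_of_imp fun h => isolatedAbove_of_le_add_two (by omega)

theorem or_increasing_drop_iff (hi : i < P.length) :
    (i = P.length - 1 ∨ Increasing (P.drop i)) ↔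
      StrictMonoOn (P.getD · 0) (Icc i (P.length - 1)) := by
  rw [← List.segment_length_sub_one, increasing_segment_iff (by omega)]
  exact or_iff_right_of_imp fun h => by simp [h]

theorem exists_proper_increasing_iff (hlen : 1 ≤ P.length) :
    (∃ i ≤ P.length - 1, (i = 0 ∨ Proper (P.take (i + 1))) ∧
        (i = P.length - 1 ∨ Increasing (P.drop i)) ∧ P.getD 0 0 ≤ P.getD i 0) ↔
      ∃ i ∈ Icc 0 (P.length - 1), IsolatedAbove (P.getD · 0) (P.getD 0 0) 0 i ∧
        StrictMonoOn (P.getD · 0) (Icc i (P.length - 1)) ∧ P.getD 0 0 ≤ P.getD i 0 := by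
  refine exists_congr fun i =>
    ⟨fun ⟨hi, hiso, hinc, hle⟩ => ?_, fun ⟨⟨_, hi⟩, hiso, hinc, hle⟩ => ?_⟩
  · rw [or_proper_take_iff (by omega), min_eq_left hle] at hiso
    exact ⟨⟨Nat.zero_le i, hi⟩, hiso, (or_increasing_drop_iff (by omega)).mp hinc, hle⟩
  · rw [← min_eq_left hle, ← or_proper_take_iff (by omega)] at hiso
    exact ⟨hi, hiso, (or_increasing_drop_iff (by omega)).mpr hinc, hle⟩

theorem exists_decreasing_proper_iff (hlen : 1 ≤ P.length) :
    (∃ i ≤ P.length - 1, (i = 0 ∨ Decreasing (P.take (i + 1))) ∧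
        (i = P.length - 1 ∨ Proper (P.drop i)) ∧ P.getD (P.length - 1) 0 ≤ P.getD i 0) ↔
      ∃ i ∈ Icc 0 (P.length - 1), StrictAntiOn (P.getD · 0) (Icc 0 i) ∧
        IsolatedAbove (P.getD · 0) (P.getD (P.length - 1) 0) i (P.length - 1) ∧
        P.getD (P.length - 1) 0 ≤ P.getD i 0 := by
  refine exists_congr fun i =>
    ⟨fun ⟨hi, hdec, hiso, hle⟩ => ?_, fun ⟨⟨_, hi⟩, hdec, hiso, hle⟩ => ?_⟩
  · rw [or_proper_drop_iff (by omega), min_eq_right hle] at hiso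
    exact ⟨⟨Nat.zero_le i, hi⟩, (or_decreasing_take_iff (by omega)).mp hdec, hiso, hle⟩
  · rw [← min_eq_right hle, ← or_proper_drop_iff (by omega)] at hiso
    exact ⟨hi, (or_decreasing_take_iff (by omega)).mpr hdec, hiso, hle⟩

end Translation

/-- Main characterization: a nonempty simple path on `[1,n]` is realized by `T_ijk(n)`
iff it splits as a proper part followed by an increasing part (junction `≥ p_0`) when
`p_0 < p_k`, or as a decreasing part followed by a proper part (junction `≥ p_k`) when
`p_0 > p_k`. -/
theorem stmt4 (n : ℕ) (P : List ℕ) (hP : ValidPath n P) (hnd : P.Nodup) :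
    Realized (Tijk n) P ↔
      (P.getD 0 0 < P.getD (P.length - 1) 0 ∧ ∃ i ≤ P.length - 1,
        (i = 0 ∨ Proper (P.take (i + 1))) ∧
        (i = P.length - 1 ∨ Increasing (P.drop i)) ∧
        P.getD 0 0 ≤ P.getD i 0) ∨
      (P.getD (P.length - 1) 0 < P.getD 0 0 ∧ ∃ i ≤ P.length - 1,
        (i = 0 ∨ Decreasing (P.take (i + 1))) ∧
        (i = P.length - 1 ∨ Proper (P.drop i)) ∧
        P.getD (P.length - 1) 0 ≤ P.getD i 0) := by
  obtain ⟨hlen, hval⟩ := hP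
  have hshape := realized_segment_iff hval hnd (l := 0) (r := P.length - 1) (by omega) (by omega)
  rw [List.segment_length_sub_one, List.drop_zero] at hshape
  rw [hshape, IjkShape, exists_proper_increasing_iff (by omega),
    exists_decreasing_proper_iff (by omega)]
end

section
/- A path P is realized by T_{ijk}(n) if and only if its reverse rev(P) is realized by T_{ijk}(n). -/
/-! Since `T_ijk(n)` lists its tuples in lexicographic order, whether a path `p_0 … p_k` is realized
by the prefix ending at `(p_0, p_k, c)` can be decided without looking at `T_ijk(n)`: the top split
vertex `w` must satisfy `w ≤ c`, and each half must be realized by the prefix of its own endpoint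
pair that precedes `(p_0, p_k, w)`, which is determined by comparing `w` with the endpoint the half
does not contain. This recursion is symmetric: reversing the path swaps the two halves together
with the endpoints they are compared with. -/

theorem Nat.sub_one_mul_add_self {a : ℕ} (ha : 1 ≤ a) (b : ℕ) : (a - 1) * b + b = a * b := by
  rw [← Nat.succ_mul, Nat.succ_eq_add_one, Nat.sub_add_cancel ha]

namespace List

variable {α : Type*} (l : List α) (d : α)

theorem getD_mem_of_lt_s5 (i : ℕ) (h : i < l.length) : l.getD i d ∈ l := by grind

theorem getD_take_of_lt_s5 {m i : ℕ} (h : i < m) : (l.take m).getD i d = l.getD i d := by grind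

theorem getD_last_take_succ {x : ℕ} (h : x < l.length) :
    (l.take (x + 1)).getD ((l.take (x + 1)).length - 1) d = l.getD x d := by grind

theorem getD_drop_zero {x : ℕ} : (l.drop x).getD 0 d = l.getD x d := by grind

theorem getD_last_drop {x : ℕ} (h : x < l.length) :
    (l.drop x).getD ((l.drop x).length - 1) d = l.getD (l.length - 1) d := by grind

theorem length_flatMap_range_of_length_eq {M : ℕ → List α} {k : ℕ} (hM : ∀ a, (M a).length = k)
    (m : ℕ) : ((range m).flatMap M).length = m * k := by
  simp [length_flatMap, hM]

theorem getD_flatMap_range_of_length_eq {M : ℕ → List α} {k : ℕ} (hM : ∀ a, (M a).length = k)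
    {m a c : ℕ} (ha : a < m) (hc : c < k) :
    ((range m).flatMap M).getD (a * k + c) d = (M a).getD c d := by
  induction m with
  | zero => omega
  | succ m ih =>
    rw [range_succ, flatMap_append]
    rcases Nat.lt_or_ge a m with ham | ham
    · rw [getD_append _ _ _ _ (by rw [length_flatMap_range_of_length_eq hM]; nlinarith)]
      exact ih ham
    · obtain rfl : a = m := by omega
      rw [getD_append_right _ _ _ _ (by rw [length_flatMap_range_of_length_eq hM]; omega),
        length_flatMap_range_of_length_eq hM]
      simp

end List

theorem length_Tijk (n : ℕ) : (Tijk n).length = n ^ 3 := by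
  simp only [Tijk, List.length_flatMap, List.length_map, List.length_range, List.map_const',
    List.sum_replicate, smul_eq_mul]
  ring

theorem Tijk_getD {n a b c : ℕ} (ha : a < n) (hb : b < n) (hc : c < n) :
    (Tijk n).getD (a * n ^ 2 + b * n + c) default = (a + 1, b + 1, c + 1) := by
  have hblock (a : ℕ) : ((List.range n).flatMap fun b =>
      (List.range n).map fun c => (a + 1, b + 1, c + 1)).length = n ^ 2 := by
    rw [List.length_flatMap_range_of_length_eq (k := n) (by simp), sq]
  rw [Tijk, add_assoc, List.getD_flatMap_range_of_length_eq _ hblock ha (by nlinarith),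
    List.getD_flatMap_range_of_length_eq _ (by simp) hb hc]
  simp [hc]

def tijkIndex (n u v w : ℕ) : ℕ := (u - 1) * n ^ 2 + (v - 1) * n + (w - 1)

theorem tijkIndex_lt {n u v w : ℕ} (hu : u ≤ n) (hv : v ≤ n) (hw : 1 ≤ w) (hwn : w ≤ n) :
    tijkIndex n u v w < n ^ 3 := by
  unfold tijkIndex
  have : (u - 1) * n ^ 2 + n ^ 2 ≤ n ^ 3 := by
    rw [← Nat.succ_mul, pow_succ n 2, mul_comm _ n]
    exact Nat.mul_le_mul_right _ (by omega)
  have : (v - 1) * n + n ≤ n ^ 2 := by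
    rw [← Nat.succ_mul, sq]
    exact Nat.mul_le_mul_right _ (by omega)
  omega

theorem Tijk_getD_tijkIndex {n u v w : ℕ} (hu : 1 ≤ u) (hun : u ≤ n) (hv : 1 ≤ v)
    (hvn : v ≤ n) (hw : 1 ≤ w) (hwn : w ≤ n) : (Tijk n).getD (tijkIndex n u v w) default = (u, v, w) := by
  rw [tijkIndex, Tijk_getD (by omega) (by omega) (by omega)]
  simp only [Nat.sub_add_cancel hu, Nat.sub_add_cancel hv, Nat.sub_add_cancel hw]

theorem eq_tijkIndex_of_Tijk_getD {n d u v w : ℕ} (hd : d < n ^ 3)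
    (h : (Tijk n).getD d default = (u, v, w)) : d = tijkIndex n u v w := by
  have hn : 0 < n := Nat.pos_of_ne_zero (by rintro rfl; simp at hd)
  have hdiv : d / n / n < n := by
    rw [Nat.div_div_eq_div_mul, Nat.div_lt_iff_lt_mul (by positivity)]
    simpa [pow_succ, mul_assoc] using hd
  have hdecomp : d = d / n / n * n ^ 2 + d / n % n * n + d % n := by
    have h1 := Nat.div_add_mod d n
    have h2 := Nat.div_add_mod (d / n) n
    rw [sq, ← mul_assoc]
    nlinarith
  rw [hdecomp, Tijk_getD hdiv (Nat.mod_lt _ hn) (Nat.mod_lt _ hn)] at h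
  simp only [Prod.mk.injEq] at h
  obtain ⟨rfl, rfl, rfl⟩ := h
  simpa [tijkIndex] using hdecomp

/-- For a path `p_0 … p_k` split at `w`, the tuples of the pair `(p_0, w)` (take `e = p_k`), resp.
`(w, p_k)` (take `e = p_0`), that precede `(p_0, p_k, w)` in `T_ijk(n)` are: all of them if `w < e`,
those with third entry below `w` if `w = e`, none if `w > e`. -/
def splitBound (n e w : ℕ) : ℕ := if w < e then n else if w = e then w - 1 else 0

theorem min_sub_tijkIndex_left {n u v w : ℕ} (hv : 1 ≤ v) (hw : 1 ≤ w) (hwn : w ≤ n) :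
    min n (tijkIndex n u v w - tijkIndex n u w 1) = splitBound n v w := by
  unfold tijkIndex splitBound
  have hw' := Nat.sub_one_mul_add_self hw n
  have hv' := Nat.sub_one_mul_add_self hv n
  split_ifs with hlt heq
  · have : w * n ≤ (v - 1) * n := Nat.mul_le_mul_right n (by omega)
    generalize (u - 1) * n ^ 2 = A at *; generalize (v - 1) * n = B at *
    generalize (w - 1) * n = C at *; omega
  · subst heq; omega
  · have : v * n ≤ (w - 1) * n := Nat.mul_le_mul_right n (by omega)
    generalize (u - 1) * n ^ 2 = A at *; generalize (v - 1) * n = B at *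
    generalize (w - 1) * n = C at *; omega

theorem min_sub_tijkIndex_right {n u v w : ℕ} (hu : 1 ≤ u) (hw : 1 ≤ w) (hwn : w ≤ n) :
    min n (tijkIndex n u v w - tijkIndex n w v 1) = splitBound n u w := by
  unfold tijkIndex splitBound
  have : n ≤ n ^ 2 := Nat.le_self_pow two_ne_zero n
  have hw' := Nat.sub_one_mul_add_self hw (n ^ 2)
  have hu' := Nat.sub_one_mul_add_self hu (n ^ 2)
  split_ifs with hlt heq
  · have : w * n ^ 2 ≤ (u - 1) * n ^ 2 := Nat.mul_le_mul_right _ (by omega)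
    generalize (u - 1) * n ^ 2 = A at *; generalize (v - 1) * n = B at *
    generalize (w - 1) * n ^ 2 = C at *; omega
  · subst heq; omega
  · have : u * n ^ 2 ≤ (w - 1) * n ^ 2 := Nat.mul_le_mul_right _ (by omega)
    generalize (u - 1) * n ^ 2 = A at *; generalize (v - 1) * n = B at *
    generalize (w - 1) * n ^ 2 = C at *; omega

/-- `RealizedUpTo n c P`: `P` is realized by the prefix of `T_ijk(n)` that ends with the tuple
`(p_0, p_k, c)`. -/
inductive RealizedUpTo (n : ℕ) : ℕ → List ℕ → Prop
  | base (c : ℕ) (P : List ℕ) (h : P.length ≤ 2) : RealizedUpTo n c P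
  | step (c : ℕ) (P : List ℕ) (x : ℕ) (hx1 : 1 ≤ x) (hx2 : x ≤ P.length - 2)
      (hc : P.getD x 0 ≤ c)
      (h1 : RealizedUpTo n (splitBound n (P.getD (P.length - 1) 0) (P.getD x 0)) (P.take (x + 1)))
      (h2 : RealizedUpTo n (splitBound n (P.getD 0 0) (P.getD x 0)) (P.drop x)) :
      RealizedUpTo n c P

theorem RealizedUpTo.reverse {n c : ℕ} {P : List ℕ} (h : RealizedUpTo n c P) :
    RealizedUpTo n c P.reverse := by
  induction h with
  | base c P h => exact .base _ _ (by simpa using h)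
  | step c P x hx1 hx2 hc _ _ ih1 ih2 =>
    have hlast : P.reverse.getD (P.reverse.length - 1) 0 = P.getD 0 0 := by grind
    have hfirst : P.reverse.getD 0 0 = P.getD (P.length - 1) 0 := by grind
    have hsplit : P.reverse.getD (P.length - 1 - x) 0 = P.getD x 0 := by grind
    have htake : P.reverse.take (P.length - 1 - x + 1) = (P.drop x).reverse := by
      rw [List.take_reverse]; congr 2; omega
    have hdrop : P.reverse.drop (P.length - 1 - x) = (P.take (x + 1)).reverse := by
      rw [List.drop_reverse]; congr 2; omega
    refine .step _ _ (P.length - 1 - x) (by omega) (by rw [List.length_reverse]; omega) ?_ ?_ ?_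
    · rwa [hsplit]
    · rwa [hlast, hsplit, htake]
    · rwa [hfirst, hsplit, hdrop]

theorem RealizedUpTo.of_realized_take {n m : ℕ} {P : List ℕ}
    (hP : ∀ v ∈ P, 1 ≤ v ∧ v ≤ n) (h : Realized ((Tijk n).take m) P) :
    RealizedUpTo n (min n (m - tijkIndex n (P.getD 0 0) (P.getD (P.length - 1) 0) 1)) P := by
  generalize hT : (Tijk n).take m = T at h
  induction h generalizing m with
  | base T P h => exact .base _ _ h
  | step T P d x hd hx1 hx2 ht _ _ ih1 ih2 =>
    subst hT
    rw [List.length_take, length_Tijk, lt_min_iff] at hd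
    have hTd : ((Tijk n).take m).take d = (Tijk n).take d := by
      rw [List.take_take, min_eq_left hd.1.le]
    have hlen : x < P.length := by omega
    obtain ⟨hu, hun⟩ := hP _ (P.getD_mem_of_lt_s5 0 0 (by omega))
    obtain ⟨hv, hvn⟩ := hP _ (P.getD_mem_of_lt_s5 0 (P.length - 1) (by omega))
    obtain ⟨hw, hwn⟩ := hP _ (P.getD_mem_of_lt_s5 0 x hlen)
    rw [List.getD_take_of_lt_s5 _ _ hd.1] at ht
    have hd_eq := eq_tijkIndex_of_Tijk_getD hd.2 ht
    refine .step _ _ x hx1 hx2 ?_ ?_ ?_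
    · unfold tijkIndex at hd_eq ⊢; omega
    · have := ih1 (fun v hv => hP v (List.mem_of_mem_take hv)) hTd.symm
      rwa [List.getD_take_of_lt_s5 _ _ (Nat.succ_pos x), List.getD_last_take_succ _ _ hlen, hd_eq,
        min_sub_tijkIndex_left hv hw hwn] at this
    · have := ih2 (fun v hv => hP v (List.mem_of_mem_drop hv)) hTd.symm
      rwa [List.getD_drop_zero, List.getD_last_drop _ _ hlen, hd_eq,
        min_sub_tijkIndex_right hu hw hwn] at this

theorem RealizedUpTo.realized_take {n m c : ℕ} {P : List ℕ}
    (hP : ∀ v ∈ P, 1 ≤ v ∧ v ≤ n) (h : RealizedUpTo n c P)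
    (hc : c ≤ min n (m - tijkIndex n (P.getD 0 0) (P.getD (P.length - 1) 0) 1)) :
    Realized ((Tijk n).take m) P := by
  induction h generalizing m with
  | base c P h => exact .base _ _ h
  | step c P x hx1 hx2 hwc _ _ ih1 ih2 =>
    have hlen : x < P.length := by omega
    obtain ⟨hu, hun⟩ := hP _ (P.getD_mem_of_lt_s5 0 0 (by omega))
    obtain ⟨hv, hvn⟩ := hP _ (P.getD_mem_of_lt_s5 0 (P.length - 1) (by omega))
    obtain ⟨hw, hwn⟩ := hP _ (P.getD_mem_of_lt_s5 0 x hlen)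
    set d := tijkIndex n (P.getD 0 0) (P.getD (P.length - 1) 0) (P.getD x 0) with hd
    have hdm : d < m := by unfold tijkIndex at hd hc; omega
    have hdn : d < n ^ 3 := tijkIndex_lt hun hvn hw hwn
    have hTd : ((Tijk n).take m).take d = (Tijk n).take d := by
      rw [List.take_take, min_eq_left hdm.le]
    refine .step _ _ d x (by simp [length_Tijk, hdm, hdn]) hx1 hx2 ?_ ?_ ?_
    · rw [List.getD_take_of_lt_s5 _ _ hdm, Tijk_getD_tijkIndex hu hun hv hvn hw hwn]
    · rw [hTd]
      refine ih1 (fun v hv => hP v (List.mem_of_mem_take hv)) ?_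
      rw [List.getD_take_of_lt_s5 _ _ (Nat.succ_pos x), List.getD_last_take_succ _ _ hlen,
        min_sub_tijkIndex_left hv hw hwn]
    · rw [hTd]
      refine ih2 (fun v hv => hP v (List.mem_of_mem_drop hv)) ?_
      rw [List.getD_drop_zero, List.getD_last_drop _ _ hlen, min_sub_tijkIndex_right hu hw hwn]

theorem realized_Tijk_iff {n : ℕ} {P : List ℕ} (hP : ValidPath n P) :
    Realized (Tijk n) P ↔ RealizedUpTo n n P := by
  obtain ⟨hlen, hP⟩ := hP
  obtain ⟨hu, hun⟩ := hP _ (P.getD_mem_of_lt_s5 0 0 (by omega))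
  obtain ⟨-, hvn⟩ := hP _ (P.getD_mem_of_lt_s5 0 (P.length - 1) (by omega))
  have hfull : min n (n ^ 3 - tijkIndex n (P.getD 0 0) (P.getD (P.length - 1) 0) 1) = n := by
    have := tijkIndex_lt (w := n) hun hvn (by omega) le_rfl
    unfold tijkIndex at this ⊢; omega
  rw [← List.take_of_length_le (length_Tijk n).le]
  refine ⟨fun h => ?_, fun h => h.realized_take hP hfull.ge⟩
  simpa only [hfull] using RealizedUpTo.of_realized_take hP h

/-- A path is realized by `T_ijk(n)` iff its reverse is realized by `T_ijk(n)`. -/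
theorem stmt5 (n : ℕ) (P : List ℕ) (hP : ValidPath n P) :
    Realized (Tijk n) P ↔ Realized (Tijk n) P.reverse := by
  have hPrev : ValidPath n P.reverse :=
    ⟨by simpa using hP.1, fun v hv => hP.2 v (List.mem_reverse.mp hv)⟩
  rw [realized_Tijk_iff hP, realized_Tijk_iff hPrev]
  exact ⟨RealizedUpTo.reverse, fun h => P.reverse_reverse ▸ h.reverse⟩
end

section
/- Let P = (p_0,...,p_k) be a simple path, and let m be the index of the maximum vertex of P. Define a 'skyscraper' to be an index i with: i < m and no j < i has p_j > p_i; or i = m; or i > m and no j > i has p_j > p_i. Then for any two consecutive skyscraper indices s < s', the subpath (p_s,...,p_{s'}) has no interior vertex exceeding min(p_s, p_{s'}); in particular it is a valley (hence proper) path. -/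
/-- `i` is a skyscraper index of `P` relative to the index `m` of the maximum vertex. -/
def Skyscraper (P : List ℕ) (m i : ℕ) : Prop :=
  i < P.length ∧
    ((i < m ∧ ∀ j < i, P.getD j 0 ≤ P.getD i 0) ∨ i = m ∨
     (m < i ∧ ∀ j, i < j → j < P.length → P.getD j 0 ≤ P.getD i 0))

/-
Left of the maximum, the skyscrapers are exactly the prefix maxima (records) of `P`; right of
it, the suffix maxima. Two consecutive skyscrapers lie on the same side of `m`, since `m` is
itself a skyscraper. On the left, walking from `s` towards `s'`, a vertex exceeding every
earlier one would be a new record, so by strong induction each interior vertex is at most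
`p_s`, and `p_s ≤ p_{s'}` because `s'` is a record (or the maximum). The right side is the
mirror image.
-/

section Records

variable {α : Type*} [LinearOrder α] {f : ℕ → α}

theorem le_of_forall_not_prefixMax {s s' : ℕ} (hs : ∀ j < s, f j ≤ f s)
    (hgap : ∀ t, s < t → t < s' → ¬ ∀ j < t, f j ≤ f t) :
    ∀ t, s < t → t < s' → f t ≤ f s := by
  intro t
  induction t using Nat.strong_induction_on with
  | _ t ih =>
    intro hst hts'
    by_contra! hlt
    refine hgap t hst hts' fun j hj => ?_
    rcases lt_trichotomy j s with hjs | rfl | hsj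
    · exact (hs j hjs).trans hlt.le
    · exact hlt.le
    · exact (ih j hj hsj (hj.trans hts')).trans hlt.le

theorem le_of_forall_not_suffixMax {L s s' : ℕ} (hs' : ∀ j, s' < j → j < L → f j ≤ f s')
    (hgap : ∀ t, s < t → t < s' → ¬ ∀ j, t < j → j < L → f j ≤ f t) :
    ∀ t, s < t → t < s' → f t ≤ f s' := by
  intro t
  induction hd : s' - t using Nat.strong_induction_on generalizing t with
  | _ d ih =>
    intro hst hts'
    by_contra! hlt
    refine hgap t hst hts' fun j htj hjL => ?_
    rcases lt_trichotomy j s' with hjs' | rfl | hs'j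
    · exact (ih (s' - j) (by omega) j rfl (hst.trans htj) hjs').trans hlt.le
    · exact hlt.le
    · exact (hs' j hs'j hjL).trans hlt.le

end Records

namespace Skyscraper

variable {P : List ℕ} {m i : ℕ}

theorem prefixMax (hmax : ∀ t < P.length, P.getD t 0 ≤ P.getD m 0) (h : Skyscraper P m i)
    (him : i ≤ m) : ∀ j < i, P.getD j 0 ≤ P.getD i 0 := by
  obtain ⟨hiL, ⟨-, hrec⟩ | rfl | ⟨hmi, -⟩⟩ := h
  · exact hrec
  · exact fun j hj => hmax j (hj.trans hiL)
  · exact absurd him (not_le.2 hmi)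

theorem suffixMax (hmax : ∀ t < P.length, P.getD t 0 ≤ P.getD m 0) (h : Skyscraper P m i)
    (hmi : m ≤ i) : ∀ j, i < j → j < P.length → P.getD j 0 ≤ P.getD i 0 := by
  obtain ⟨-, ⟨him, -⟩ | rfl | ⟨-, hrec⟩⟩ := h
  · exact absurd hmi (not_le.2 him)
  · exact fun j _ hjL => hmax j hjL
  · exact hrec

end Skyscraper

theorem valley_drop_take {P : List ℕ} {s s' : ℕ} (hlt : s < s') (hs' : s' < P.length)
    (hbound : ∀ t, s < t → t < s' → P.getD t 0 ≤ min (P.getD s 0) (P.getD s' 0)) :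
    Valley ((P.drop s).take (s' - s + 1)) := by
  have hlen : ((P.drop s).take (s' - s + 1)).length = s' - s + 1 := by
    simp only [List.length_take, List.length_drop]
    omega
  have hget : ∀ u ≤ s' - s, ((P.drop s).take (s' - s + 1)).getD u 0 = P.getD (s + u) 0 := by
    intro u hu
    simp only [List.getD_eq_getElem?_getD, List.getElem?_take, List.getElem?_drop,
      if_pos (Nat.lt_succ_of_le hu)]
  intro t ht1 ht2
  rw [hlen] at ht2
  rw [hlen, hget t (by omega), hget 0 (by omega), hget _ (by omega), Nat.add_zero,
    show s + (s' - s + 1 - 1) = s' by omega]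
  exact hbound (s + t) (by omega) (by omega)

theorem stmt7_general (P : List ℕ)
    (m : ℕ) (hm : m < P.length) (hmax : ∀ t < P.length, P.getD t 0 ≤ P.getD m 0)
    (s s' : ℕ) (hs : Skyscraper P m s) (hs' : Skyscraper P m s') (hlt : s < s')
    (hcons : ∀ t, s < t → t < s' → ¬ Skyscraper P m t) :
    (∀ t, s < t → t < s' → P.getD t 0 ≤ min (P.getD s 0) (P.getD s' 0)) ∧
    Valley ((P.drop s).take (s' - s + 1)) := by
  have hside : s' ≤ m ∨ m ≤ s := by
    by_contra! h
    exact hcons m h.2 h.1 ⟨hm, Or.inr (Or.inl rfl)⟩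
  have hbound : ∀ t, s < t → t < s' → P.getD t 0 ≤ min (P.getD s 0) (P.getD s' 0) := by
    rcases hside with hleft | hright
    · have hss' := hs'.prefixMax hmax hleft s hlt
      rw [min_eq_left hss']
      refine le_of_forall_not_prefixMax (hs.prefixMax hmax (hlt.le.trans hleft)) ?_
      exact fun t hst hts' hrec =>
        hcons t hst hts' ⟨hts'.trans hs'.1, Or.inl ⟨hts'.trans_le hleft, hrec⟩⟩
    · have hs's := hs.suffixMax hmax hright s' hlt hs'.1
      rw [min_eq_right hs's]
      refine le_of_forall_not_suffixMax (hs'.suffixMax hmax (hright.trans hlt.le)) ?_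
      exact fun t hst hts' hrec =>
        hcons t hst hts' ⟨hts'.trans hs'.1, Or.inr (Or.inr ⟨hright.trans_lt hst, hrec⟩)⟩
  exact ⟨hbound, valley_drop_take hlt hs'.1 hbound⟩

/-- Between two consecutive skyscraper indices `s < s'` of a simple path, no interior
vertex exceeds `min(p_s, p_{s'})`; in particular the subpath from `s` to `s'`
is a valley path. -/
theorem stmt7 (n : ℕ) (P : List ℕ) (hP : ValidPath n P) (hnd : P.Nodup)
    (m : ℕ) (hm : m < P.length) (hmax : ∀ t < P.length, P.getD t 0 ≤ P.getD m 0)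
    (s s' : ℕ) (hs : Skyscraper P m s) (hs' : Skyscraper P m s') (hlt : s < s')
    (hcons : ∀ t, s < t → t < s' → ¬ Skyscraper P m t) :
    (∀ t, s < t → t < s' → P.getD t 0 ≤ min (P.getD s 0) (P.getD s' 0)) ∧
    Valley ((P.drop s).take (s' - s + 1)) :=
  stmt7_general P m hm hmax s s' hs hs' hlt hcons
end

section
/- If a path P = (p_0,...,p_k) with p_0 < p_k is such that (p_0,...,p_x) is proper and (p_x,...,p_k) is increasing for some x with p_x ≥ p_0, then the total weight of P equals the weight of the proper part plus the weight of the increasing part; moreover the minimum weight over all such paths from i to j (for i < j) satisfies the recurrence M[i,j] = min( Proper[i,j], min over edges (k,j) with i ≤ k < j of M[i,k] + w(k,j) ), where Proper[i,j] is the minimum weight of a proper path from i to j. -/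
/-- Total weight of a path, with `EReal` weights. -/
noncomputable def pathWeightE (W : ℕ → ℕ → EReal) (P : List ℕ) : EReal :=
  ((P.zip P.tail).map fun q => W q.1 q.2).sum

/-- The set of weights of paths from `i` to `j` decomposable as a proper path
followed by an increasing path, with junction vertex `≥ i`. -/
def DecompSet (n : ℕ) (W : ℕ → ℕ → EReal) (i j : ℕ) : Set EReal :=
  {c | ∃ P : List ℕ, ValidPath n P ∧ P.getD 0 0 = i ∧ P.getD (P.length - 1) 0 = j ∧
    (∃ x ≤ P.length - 1, (x = 0 ∨ Proper (P.take (x + 1))) ∧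
      (x = P.length - 1 ∨ Increasing (P.drop x)) ∧ i ≤ P.getD x 0) ∧
    pathWeightE W P = c}

/-- `M[i,j]`: the minimum weight over decomposable paths from `i` to `j`
(`⊤` if there are none). -/
noncomputable def MMin (n : ℕ) (W : ℕ → ℕ → EReal) (i j : ℕ) : EReal :=
  sInf (DecompSet n W i j)

/-- `Proper[i,j]`: the minimum weight of a proper path from `i` to `j`. -/
noncomputable def ProperMin (n : ℕ) (W : ℕ → ℕ → EReal) (i j : ℕ) : EReal :=
  sInf {c | ∃ P : List ℕ, ValidPath n P ∧ P.getD 0 0 = i ∧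
    P.getD (P.length - 1) 0 = j ∧ Proper P ∧ pathWeightE W P = c}

/-!
The weight of a path is a sum over its consecutive edges, so it splits at any vertex. For the
recurrence, look at the last edge `(k, j)` of a path from `i` to `j` that is proper up to a junction
`p_x ≥ i` and increasing afterwards. Either the increasing part is trivial, and the path is proper;
or the edge lies in the increasing part, so `i ≤ p_x ≤ k < j` and deleting `j` leaves such a path
from `i` to `k`. Conversely, appending an edge `(k, j)` with `k < j` to such a path ending at `k`
keeps its increasing part increasing. Paths with at most three vertices are proper vacuously.
-/

section PathWeight

variable (W : ℕ → ℕ → EReal)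

@[simp] lemma pathWeightE_nil : pathWeightE W [] = 0 := rfl

@[simp] lemma pathWeightE_singleton (a : ℕ) : pathWeightE W [a] = 0 := rfl

@[simp] lemma pathWeightE_cons_cons (a b : ℕ) (r : List ℕ) :
    pathWeightE W (a :: b :: r) = W a b + pathWeightE W (b :: r) := by
  simp [pathWeightE]

theorem pathWeightE_eq_take_add_drop :
    ∀ (P : List ℕ) (x : ℕ),
      pathWeightE W P = pathWeightE W (P.take (x + 1)) + pathWeightE W (P.drop x)
  | [], _ => by simp
  | [a], x => by cases x <;> simp
  | a :: b :: r, 0 => by simp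
  | a :: b :: r, x + 1 => by
    simp [pathWeightE_eq_take_add_drop (b :: r) x, add_assoc]

theorem pathWeightE_append_singleton :
    ∀ {Q : List ℕ}, Q ≠ [] → ∀ b : ℕ,
      pathWeightE W (Q ++ [b]) = pathWeightE W Q + W (Q.getD (Q.length - 1) 0) b
  | [a], _, b => by simp
  | a :: c :: r, _, b => by
    rw [List.cons_append, List.cons_append, pathWeightE_cons_cons, ← List.cons_append,
      pathWeightE_append_singleton (List.cons_ne_nil c r) b, pathWeightE_cons_cons, add_assoc]
    simp

variable {W} in
theorem pathWeightE_ne_bot (hW : ∀ u v, W u v ≠ ⊥) (P : List ℕ) : pathWeightE W P ≠ ⊥ :=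
  List.sum_induction (· ≠ ⊥) (fun _ _ ha hb => EReal.add_ne_bot_iff.mpr ⟨ha, hb⟩)
    EReal.zero_ne_bot fun _ h => by obtain ⟨_, _, rfl⟩ := List.mem_map.mp h; exact hW _ _

end PathWeight

lemma proper_of_length_le_three {P : List ℕ} (h : P.length ≤ 3) : Proper P :=
  fun ⟨_, ht, ht', _⟩ => by omega

lemma increasing_drop_append_singleton_iff {Q : List ℕ} {x j : ℕ} (hx : x < Q.length) :
    Increasing ((Q ++ [j]).drop x) ↔ Increasing (Q.drop x) ∧ Q.getD (Q.length - 1) 0 < j := by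
  rw [Increasing, Increasing, List.drop_append_of_le_length hx.le, List.Chain', List.Chain',
    List.isChain_append]
  simp [List.getLast?_eq_getElem?, List.getD_eq_getElem?_getD,
    show x + (Q.length - x - 1) = Q.length - 1 by omega,
    List.getElem?_eq_getElem (show Q.length - 1 < Q.length by omega)]

lemma getD_le_getD_last_of_increasing_drop {Q : List ℕ} {x : ℕ} (h : Increasing (Q.drop x))
    (hx : x < Q.length) : Q.getD x 0 ≤ Q.getD (Q.length - 1) 0 := by
  rw [List.getD_eq_getElem _ _ hx, List.getD_eq_getElem _ _ (by omega)]
  rcases (Nat.le_sub_one_of_lt hx).lt_or_eq with hlt | heq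
  · have := List.pairwise_iff_getElem.mp (List.isChain_iff_pairwise.mp h) 0 (Q.length - 1 - x)
      (by simp; omega) (by simp; omega) (by omega)
    simpa [show x + (Q.length - 1 - x) = Q.length - 1 by omega] using this.le
  · simp [heq]

-- The condition on `P` in `DecompSet`, with junction index `x`.
def ProperThenIncreasing (i : ℕ) (P : List ℕ) : Prop :=
  ∃ x ≤ P.length - 1, (x = 0 ∨ Proper (P.take (x + 1))) ∧
    (x = P.length - 1 ∨ Increasing (P.drop x)) ∧ i ≤ P.getD x 0

namespace ProperThenIncreasing

variable {i j : ℕ} {P Q : List ℕ}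

lemma of_proper (hP : Proper P) (hi : i ≤ P.getD (P.length - 1) 0) :
    ProperThenIncreasing i P :=
  ⟨P.length - 1, le_rfl, Or.inr (by rwa [List.take_of_length_le (by omega)]), Or.inl rfl, hi⟩

lemma append_singleton (h : ProperThenIncreasing i Q) (hQ : Q ≠ [])
    (hj : Q.getD (Q.length - 1) 0 < j) : ProperThenIncreasing i (Q ++ [j]) := by
  obtain ⟨x, hx, hprop, hinc, hix⟩ := h
  have hxQ : x < Q.length := by have := List.length_pos_iff.mpr hQ; omega
  refine ⟨x, by simp; omega, ?_, Or.inr ?_, by rwa [List.getD_append _ _ _ _ hxQ]⟩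
  · rwa [List.take_append_of_le_length hxQ]
  · refine (increasing_drop_append_singleton_iff hxQ).mpr ⟨?_, hj⟩
    rcases hinc with rfl | hinc
    · rw [List.drop_length_sub_one hQ]
      exact List.isChain_singleton _
    · exact hinc

lemma proper_or_of_append_singleton (h : ProperThenIncreasing i (Q ++ [j])) :
    Proper (Q ++ [j]) ∨ 2 ≤ Q.length ∧ ProperThenIncreasing i Q ∧
      i ≤ Q.getD (Q.length - 1) 0 ∧ Q.getD (Q.length - 1) 0 < j := by
  obtain ⟨x, hx, hprop, hinc, hix⟩ := h
  rw [List.length_append, List.length_singleton, Nat.add_sub_cancel] at hx hinc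
  by_cases hQ2 : Q.length < 2
  · exact Or.inl (proper_of_length_le_three (by simp; omega))
  rcases hx.lt_or_eq with hxQ | rfl
  · obtain ⟨hincQ, hj⟩ := (increasing_drop_append_singleton_iff hxQ).mp (hinc.resolve_left hxQ.ne)
    rw [List.getD_append _ _ _ _ hxQ] at hix
    refine Or.inr ⟨by omega, ⟨x, by omega, ?_, Or.inr hincQ, hix⟩,
      hix.trans (getD_le_getD_last_of_increasing_drop hincQ hxQ), hj⟩
    rwa [List.take_append_of_le_length hxQ] at hprop
  · have hP := hprop.resolve_left (by omega)
    rw [List.take_of_length_le (by simp)] at hP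
    exact Or.inl hP

end ProperThenIncreasing

section Recurrence

variable {n : ℕ} {W : ℕ → ℕ → EReal} {i j k : ℕ}

lemma mMin_le_properMin (hij : i ≤ j) : MMin n W i j ≤ ProperMin n W i j :=
  sInf_le_sInf fun _ ⟨P, hP, h0, hl, hprop, hw⟩ =>
    ⟨P, hP, h0, hl, ProperThenIncreasing.of_proper hprop (hl ▸ hij), hw⟩

lemma add_mem_decompSet (hjn : j ≤ n) (hkj : k < j) {t : EReal} (ht : t ∈ DecompSet n W i k) :
    t + W k j ∈ DecompSet n W i j := by
  obtain ⟨Q, hQ, h0, hl, hsplit, rfl⟩ := ht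
  have hQne : Q ≠ [] := List.ne_nil_of_length_pos (by have := hQ.1; omega)
  have hQpos : 0 < Q.length := List.length_pos_iff.mpr hQne
  refine ⟨Q ++ [j], ⟨by simp; omega, ?_⟩, by rwa [List.getD_append _ _ _ _ hQpos], by simp,
    ProperThenIncreasing.append_singleton hsplit hQne (hl ▸ hkj),
    by rw [pathWeightE_append_singleton W hQne, hl]⟩
  simp only [List.mem_append, List.mem_singleton]
  rintro v (hv | rfl)
  · exact hQ.2 v hv
  · omega

lemma mMin_le_mMin_add (hjn : j ≤ n) (hkj : k < j) (hbot : W k j ≠ ⊥) (htop : W k j ≠ ⊤) :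
    MMin n W i j ≤ MMin n W i k + W k j := by
  rw [← EReal.sub_le_iff_le_add (Or.inl hbot) (Or.inl htop)]
  refine le_sInf fun t ht => ?_
  rw [EReal.sub_le_iff_le_add (Or.inl hbot) (Or.inl htop)]
  exact sInf_le (add_mem_decompSet hjn hkj ht)

lemma min_properMin_sInf_le_of_mem_decompSet (hW : ∀ u v, W u v ≠ ⊥) {c : EReal}
    (hc : c ∈ DecompSet n W i j) :
    min (ProperMin n W i j)
      (sInf {c | ∃ k, i ≤ k ∧ k < j ∧ W k j ≠ ⊤ ∧ c = MMin n W i k + W k j}) ≤ c := by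
  obtain ⟨P, hP, h0, hl, hsplit, rfl⟩ := hc
  obtain ⟨Q, b, rfl⟩ : ∃ Q b, P = Q ++ [b] :=
    (List.eq_nil_or_concat' P).resolve_left (by rintro rfl; simp [ValidPath] at hP)
  obtain rfl : j = b := by simpa using hl.symm
  rcases ProperThenIncreasing.proper_or_of_append_singleton hsplit with
    hprop | ⟨hQ2, hQsplit, hik, hkj⟩
  · exact (min_le_left _ _).trans (sInf_le ⟨_, hP, h0, hl, hprop, rfl⟩)
  have hQne : Q ≠ [] := List.ne_nil_of_length_pos (by omega)
  set k := Q.getD (Q.length - 1) 0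
  rw [pathWeightE_append_singleton W hQne]
  by_cases htop : W k j = ⊤
  · rw [htop, EReal.add_top_of_ne_bot (pathWeightE_ne_bot hW Q)]
    exact le_top
  have hQmem : pathWeightE W Q ∈ DecompSet n W i k :=
    ⟨Q, ⟨hQ2, fun v hv => hP.2 v (List.mem_append_left _ hv)⟩,
      by rwa [List.getD_append _ _ _ _ (by omega)] at h0, rfl, hQsplit, rfl⟩
  refine (min_le_right _ _).trans ((sInf_le ?_).trans (add_le_add_left (sInf_le hQmem) _))
  exact ⟨k, hik, hkj, htop, rfl⟩

end Recurrence

theorem stmt11_general (n : ℕ) (W : ℕ → ℕ → EReal) (hW : ∀ u v, W u v ≠ ⊥)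
    (i j : ℕ) (hjn : j ≤ n) (hij : i < j) :
    (∀ P : List ℕ, ValidPath n P → P.getD 0 0 = i → P.getD (P.length - 1) 0 = j →
      ∀ x ≤ P.length - 1, (x = 0 ∨ Proper (P.take (x + 1))) →
        (x = P.length - 1 ∨ Increasing (P.drop x)) → i ≤ P.getD x 0 →
        pathWeightE W P = pathWeightE W (P.take (x + 1)) + pathWeightE W (P.drop x)) ∧
    MMin n W i j = min (ProperMin n W i j)
      (sInf {c | ∃ k, i ≤ k ∧ k < j ∧ W k j ≠ ⊤ ∧ c = MMin n W i k + W k j}) := by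
  refine ⟨fun P _ _ _ x _ _ _ _ => pathWeightE_eq_take_add_drop W P x, le_antisymm ?_ ?_⟩
  · refine le_min (mMin_le_properMin hij.le) (le_sInf ?_)
    rintro _ ⟨k, -, hkj, htop, rfl⟩
    exact mMin_le_mMin_add hjn hkj (hW k j) htop
  · exact le_sInf fun _ => min_properMin_sInf_le_of_mem_decompSet hW

/-- For a path decomposable as proper followed by increasing, its weight splits as
the sum of the two parts; and `M[i,j]` (for `i < j`) satisfies the recurrence
`M[i,j] = min(Proper[i,j], min over edges (k,j) with i ≤ k < j of M[i,k] + w(k,j))`. -/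
theorem stmt11 (n : ℕ) (W : ℕ → ℕ → EReal) (hW : ∀ u v, W u v ≠ ⊥)
    (hcyc : ∀ P : List ℕ, 2 ≤ P.length → (∀ v ∈ P, 1 ≤ v ∧ v ≤ n) →
      P.getD 0 0 = P.getD (P.length - 1) 0 → 0 ≤ pathWeightE W P)
    (i j : ℕ) (hi1 : 1 ≤ i) (hjn : j ≤ n) (hij : i < j) :
    (∀ P : List ℕ, ValidPath n P → P.getD 0 0 = i → P.getD (P.length - 1) 0 = j →
      ∀ x ≤ P.length - 1, (x = 0 ∨ Proper (P.take (x + 1))) →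
        (x = P.length - 1 ∨ Increasing (P.drop x)) → i ≤ P.getD x 0 →
        pathWeightE W P = pathWeightE W (P.take (x + 1)) + pathWeightE W (P.drop x)) ∧
    MMin n W i j = min (ProperMin n W i j)
      (sInf {c | ∃ k, i ≤ k ∧ k < j ∧ W k j ≠ ⊤ ∧ c = MMin n W i k + W k j}) :=
  stmt11_general n W hW i j hjn hij
end

section
/- If a path P = (p_0,...,p_k) is realized by a prefix of T_{ijk}(n) of length l, and the l-th element of T_{ijk}(n) is (i, j, k') with j < k', then any newly realized path using that element as its top-level split must be exactly the path (i, k', j) of two edges. -/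
/-!
`T_ijk(n)` is sorted lexicographically, so the prefix before the tuple `(i, j, k')` contains no
tuple `(i, k', ·)` (as `j < k'`) and no tuple `(k', j, ·)` (as `i < k'`). A realized path with more
than one edge needs a tuple `(first vertex, last vertex, ·)` in its sequence, so both halves of `P`
at `k'` are single edges.
-/

theorem Tijk_pairwise_lex (n : ℕ) :
    (Tijk n).Pairwise (Prod.Lex (· < ·) (Prod.Lex (· < ·) (· < ·))) := by
  refine List.pairwise_flatMap.2 ⟨fun a _ => List.pairwise_flatMap.2 ⟨fun b _ => ?_, ?_⟩, ?_⟩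
  · exact List.pairwise_map.2 (List.pairwise_lt_range.imp fun h => by simp [Prod.lex_def, h])
  · refine List.pairwise_lt_range.imp fun h s hs t ht => ?_
    simp only [List.mem_map, List.mem_range] at hs ht
    obtain ⟨c, -, rfl⟩ := hs
    obtain ⟨c', -, rfl⟩ := ht
    simp [Prod.lex_def, h]
  · refine List.pairwise_lt_range.imp fun h s hs t ht => ?_
    simp only [List.mem_flatMap, List.mem_map, List.mem_range] at hs ht
    obtain ⟨b, -, c, -, rfl⟩ := hs
    obtain ⟨b', -, c', -, rfl⟩ := ht
    simp [Prod.lex_def, h]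

theorem List.Pairwise.rel_of_mem_take {α : Type*} {R : α → α → Prop} {L : List α}
    (hL : L.Pairwise R) {m : ℕ} (hm : m < L.length) {s : α} (hs : s ∈ L.take m) :
    R s L[m] := by
  have hmem := List.getElem_mem (l := L.drop m) (n := 0) (by simpa)
  rw [List.getElem_drop] at hmem
  exact hL.rel_of_mem_take_of_mem_drop hs hmem

theorem Realized.exists_mem {T : List (ℕ × ℕ × ℕ)} {P : List ℕ} (h : Realized T P)
    (hP : 3 ≤ P.length) : ∃ v, (P.getD 0 0, P.getD (P.length - 1) 0, v) ∈ T := by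
  cases h with
  | base _ _ h => omega
  | step _ _ d x hd _ _ ht => exact ⟨_, ht ▸ List.getD_eq_getElem .. ▸ List.getElem_mem hd⟩

theorem Tijk_realized_take_length_le {n e : ℕ} (he : e < (Tijk n).length) {Q : List ℕ}
    (hQ : Realized ((Tijk n).take e) Q)
    (hlt : Prod.Lex (· < ·) (· < ·) ((Tijk n)[e].1, (Tijk n)[e].2.1)
      (Q.getD 0 0, Q.getD (Q.length - 1) 0)) :
    Q.length ≤ 2 := by
  by_contra! hQ3
  obtain ⟨v, hv⟩ := hQ.exists_mem hQ3
  have := (Tijk_pairwise_lex n).rel_of_mem_take he hv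
  simp only [Prod.lex_def] at this hlt
  omega

theorem stmt13_general (n l i j k' : ℕ)
    (helem : (Tijk n).getD (l - 1) default = (i, j, k'))
    (hord : i < j ∧ j < k' ∨ j < i ∧ i < k')
    (P : List ℕ)
    (hhead : P.getD 0 0 = i) (hlast : P.getD (P.length - 1) 0 = j)
    (x : ℕ) (hx1 : 1 ≤ x) (hx2 : x ≤ P.length - 2) (hxk : P.getD x 0 = k')
    (h1 : Realized ((Tijk n).take (l - 1)) (P.take (x + 1)))
    (h2 : Realized ((Tijk n).take (l - 1)) (P.drop x)) :
    P = [i, k', j] := by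
  have he : l - 1 < (Tijk n).length := by
    by_contra! h
    rw [List.getD_eq_default _ _ h] at helem
    simp only [default, Prod.mk.injEq] at helem
    omega
  rw [List.getD_eq_getElem _ _ he] at helem
  obtain ⟨hik, hjk⟩ : i < k' ∧ j < k' := by omega
  simp only [List.getD_eq_getElem?_getD] at hhead hlast hxk
  have hleft : (P.take (x + 1)).length ≤ 2 := by
    refine Tijk_realized_take_length_le he h1 ?_
    have hlast_idx : min (x + 1) P.length - 1 = x := by omega
    simpa [List.getD_eq_getElem?_getD, hlast_idx, hhead, hxk, helem, Prod.lex_def] using hjk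
  have hright : (P.drop x).length ≤ 2 := by
    refine Tijk_realized_take_length_le he h2 ?_
    have hlast_idx : x + (P.length - x - 1) = P.length - 1 := by omega
    simpa [List.getD_eq_getElem?_getD, hlast_idx, hlast, hxk, helem, Prod.lex_def] using hik
  obtain ⟨rfl, hP3⟩ : x = 1 ∧ P.length = 3 := by
    simp only [List.length_take, List.length_drop] at hleft hright
    omega
  match P, hP3 with
  | [a, b, c], _ => simp_all

/-- If the `l`-th element (1-indexed) of `T_ijk(n)` is `(i, j, k')` with
`i < j < k'` or `j < i < k'`, then any path realized using that element as its
top-level split (with both halves realized by the length-`(l-1)` prefix) must be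
exactly the two-edge path `(i, k', j)`. -/
theorem stmt13 (n l i j k' : ℕ) (hl1 : 1 ≤ l) (hl : l ≤ (Tijk n).length)
    (helem : (Tijk n).getD (l - 1) default = (i, j, k'))
    (hord : i < j ∧ j < k' ∨ j < i ∧ i < k')
    (P : List ℕ) (hP : ValidPath n P)
    (hhead : P.getD 0 0 = i) (hlast : P.getD (P.length - 1) 0 = j)
    (x : ℕ) (hx1 : 1 ≤ x) (hx2 : x ≤ P.length - 2) (hxk : P.getD x 0 = k')
    (h1 : Realized ((Tijk n).take (l - 1)) (P.take (x + 1)))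
    (h2 : Realized ((Tijk n).take (l - 1)) (P.drop x)) :
    P = [i, k', j] :=
  stmt13_general n l i j k' helem hord P hhead hlast x hx1 hx2 hxk h1 h2
end

section
/- Let A be the adjacency matrix of a graph G with no negative cycles, and let M be the matrix obtained by applying the relaxation A[i,j] ← min(A[i,j], A[i,k] + A[k,j]) for each tuple (i,j,k) of a sequence T in order. Then for every pair (i,j), M[i,j] equals the minimum over all paths from i to j realized by T of the path's total weight (with M[i,j] = A[i,j] if only trivial paths are realized). -/
/-!
Both inequalities are proved by induction. Relaxation entries only decrease, and the tuple
`(p_0, p_m, p_x)` that splits a realized path bounds the entry `(p_0, p_m)` by the sum of the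
entries of the two halves at that time; so induction on the realization gives
`relaxAll A T i j ≤ pathWeight A P`. Conversely, induction on `T` maintains, for every pair,
a realized path whose weight is exactly the current entry: when the relaxation with `(i, j, k)`
takes its second branch, the paths for `(i, k)` and `(k, j)` glue at `k` into a path realized by
the extended sequence.
-/

section Lists

variable {α : Type*}

lemma getD_zero_append {L : List α} (l : List α) (d : α) (hL : L ≠ []) :
    (L ++ l).getD 0 d = L.getD 0 d :=
  List.getD_append _ _ _ _ (List.length_pos_iff.mpr hL)

lemma getD_length_sub_one_append (l : List α) {Q : List α} (d : α) (hQ : Q ≠ []) :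
    (l ++ Q).getD ((l ++ Q).length - 1) d = Q.getD (Q.length - 1) d := by
  have := List.length_pos_iff.mpr hQ
  rw [List.getD_append_right _ _ _ _ (by simp only [List.length_append]; omega)]
  congr 1
  simp only [List.length_append]
  omega

lemma eq_dropLast_append_of_getD {P : List α} {d k : α} (hP : P ≠ [])
    (h : P.getD (P.length - 1) d = k) : P = P.dropLast ++ [k] := by
  conv_lhs => rw [← List.dropLast_append_getLast hP]
  rw [List.getLast_eq_getElem, ← List.getD_eq_getElem _ d, h]

lemma take_length_add_one_append_cons (L R : List α) (k : α) :
    (L ++ k :: R).take (L.length + 1) = L ++ [k] := by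
  simp [List.take_append]

end Lists

section PathWeight

variable {W : ℕ → ℕ → WithTop ℤ}

lemma pathWeight_cons_cons (a b : ℕ) (l : List ℕ) :
    pathWeight W (a :: b :: l) = W a b + pathWeight W (b :: l) := rfl

lemma pathWeight_append_cons (L : List ℕ) (k : ℕ) (R : List ℕ) :
    pathWeight W (L ++ k :: R) = pathWeight W (L ++ [k]) + pathWeight W (k :: R) := by
  induction L with
  | nil => simp [pathWeight]
  | cons a L ih =>
    cases L with
    | nil => simp [pathWeight]
    | cons b L => simp only [List.cons_append, pathWeight_cons_cons] at ih ⊢; rw [ih, add_assoc]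

end PathWeight

section Relax

variable {A : ℕ → ℕ → WithTop ℤ}

lemma relaxStep_le (t : ℕ × ℕ × ℕ) (i j : ℕ) : relaxStep A t i j ≤ A i j := by
  unfold relaxStep
  split_ifs
  exacts [min_le_left _ _, le_rfl]

lemma relaxStep_apply_self (i j k : ℕ) :
    relaxStep A (i, j, k) i j = min (A i j) (A i k + A k j) :=
  if_pos ⟨rfl, rfl⟩

lemma relaxStep_apply_of_ne {t : ℕ × ℕ × ℕ} {i j : ℕ} (h : ¬(i = t.1 ∧ j = t.2.1)) :
    relaxStep A t i j = A i j :=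
  if_neg h

lemma relaxAll_le (T : List (ℕ × ℕ × ℕ)) (i j : ℕ) : relaxAll A T i j ≤ A i j := by
  induction T generalizing A with
  | nil => exact le_rfl
  | cons t T ih => exact (ih (A := relaxStep A t)).trans (relaxStep_le t i j)

lemma relaxAll_append (T₁ T₂ : List (ℕ × ℕ × ℕ)) :
    relaxAll A (T₁ ++ T₂) = relaxAll (relaxAll A T₁) T₂ :=
  List.foldl_append ..

lemma relaxAll_concat (T : List (ℕ × ℕ × ℕ)) (t : ℕ × ℕ × ℕ) :
    relaxAll A (T ++ [t]) = relaxStep (relaxAll A T) t :=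
  List.foldl_concat ..

lemma relaxAll_le_relaxAll_take (T : List (ℕ × ℕ × ℕ)) (d i j : ℕ) :
    relaxAll A T i j ≤ relaxAll A (T.take d) i j := by
  conv_lhs => rw [← List.take_append_drop d T, relaxAll_append]
  exact relaxAll_le _ i j

end Relax

section Realized

variable {T : List (ℕ × ℕ × ℕ)}

lemma Realized.append_right {P : List ℕ} (h : Realized T P) (T' : List (ℕ × ℕ × ℕ)) :
    Realized (T ++ T') P := by
  induction h with
  | base T P h => exact .base _ _ h
  | step T P d x hd hx1 hx2 ht _ _ ih1 ih2 =>
    have hd' : d < (T ++ T').length := by simp only [List.length_append]; omega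
    refine .step _ _ d x hd' hx1 hx2 ?_ ?_ ?_
    · rwa [List.getD_eq_getElem _ _ hd', List.getElem_append_left hd,
        ← List.getD_eq_getElem _ _ hd]
    · rwa [List.take_append_of_le_length hd.le]
    · rwa [List.take_append_of_le_length hd.le]

lemma Realized.append_cons {L R : List ℕ} {k : ℕ} (hL : Realized T (L ++ [k]))
    (hR : Realized T (k :: R)) (hL0 : L ≠ []) (hR0 : R ≠ []) {i j : ℕ}
    (hi : L.getD 0 0 = i) (hj : (k :: R).getD R.length 0 = j) :
    Realized (T ++ [(i, j, k)]) (L ++ k :: R) := by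
  have hLlen := List.length_pos_iff.mpr hL0
  have hRlen := List.length_pos_iff.mpr hR0
  refine .step _ _ T.length L.length (by simp) (by omega) (by simp; omega) ?_ ?_ ?_
  · subst hi hj
    rw [getD_zero_append _ _ hL0, getD_length_sub_one_append _ _ (List.cons_ne_nil k R)]
    simp
  · simpa [take_length_add_one_append_cons] using hL
  · simpa using hR

variable {A : ℕ → ℕ → WithTop ℤ}

theorem Realized.relaxAll_le_pathWeight (hA : ∀ i, A i i = 0) {P : List ℕ}
    (h : Realized T P) :
    relaxAll A T (P.getD 0 0) (P.getD (P.length - 1) 0) ≤ pathWeight A P := by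
  induction h with
  | base T P h =>
    match P, h with
    | [], _ => simpa [hA, pathWeight] using relaxAll_le (A := A) T 0 0
    | [a], _ => simpa [hA, pathWeight] using relaxAll_le (A := A) T a a
    | [a, b], _ => simpa [pathWeight] using relaxAll_le (A := A) T a b
  | step T P d x hd hx1 hx2 ht _ _ ih1 ih2 =>
    obtain ⟨L, k, R, rfl, rfl⟩ : ∃ L k R, P = L ++ k :: R ∧ L.length = x :=
      ⟨P.take x, P[x], P.drop (x + 1), by rw [← List.drop_eq_getElem_cons, List.take_append_drop],
        List.length_take_of_le (by omega)⟩
    have hL0 : L ≠ [] := List.ne_nil_of_length_pos hx1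
    have hk : (L ++ k :: R).getD L.length 0 = k := by simp
    rw [take_length_add_one_append_cons, getD_zero_append _ _ hL0,
      getD_length_sub_one_append _ _ (List.cons_ne_nil k [])] at ih1
    rw [List.drop_left, List.getD_cons_zero] at ih2
    rw [getD_zero_append _ _ hL0, getD_length_sub_one_append _ _ (List.cons_ne_nil k R)] at ht ⊢
    rw [hk] at ht
    set M := relaxAll A (T.take d)
    calc relaxAll A T (L.getD 0 0) _
        ≤ relaxAll A (T.take (d + 1)) (L.getD 0 0) _ := relaxAll_le_relaxAll_take _ _ _ _
      _ = min (M (L.getD 0 0) _) (M (L.getD 0 0) k + M k _) := by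
        rw [List.take_add_one, List.getElem?_eq_getElem hd, Option.toList_some, relaxAll_concat,
          ← List.getD_eq_getElem _ default hd, ht, relaxStep_apply_self]
      _ ≤ M (L.getD 0 0) k + M k _ := min_le_right _ _
      _ ≤ pathWeight A (L ++ [k]) + pathWeight A (k :: R) := add_le_add (by simpa using ih1) ih2
      _ = pathWeight A (L ++ k :: R) := (pathWeight_append_cons L k R).symm

end Realized

section RealizedPath

variable {n : ℕ} {T : List (ℕ × ℕ × ℕ)} {A : ℕ → ℕ → WithTop ℤ}

def RealizedPath (n : ℕ) (T : List (ℕ × ℕ × ℕ)) (i j : ℕ) (P : List ℕ) : Prop :=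
  P ≠ [] ∧ (∀ v ∈ P, 1 ≤ v ∧ v ≤ n) ∧ P.getD 0 0 = i ∧ P.getD (P.length - 1) 0 = j ∧
    Realized T P

lemma RealizedPath.append_right {i j : ℕ} {P : List ℕ} (h : RealizedPath n T i j P)
    (T' : List (ℕ × ℕ × ℕ)) : RealizedPath n (T ++ T') i j P :=
  ⟨h.1, h.2.1, h.2.2.1, h.2.2.2.1, h.2.2.2.2.append_right T'⟩

lemma RealizedPath.eq_singleton {i j : ℕ} {P : List ℕ} (h : RealizedPath n T i j P)
    (hP : P.length < 2) : P = [i] ∧ j = i := by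
  obtain ⟨hne, -, hi, hj, -⟩ := h
  have hlen : P.length = 1 := by have := List.length_pos_iff.mpr hne; omega
  obtain ⟨v, rfl⟩ := List.length_eq_one_iff.mp hlen
  simp only [List.getD_cons_zero, List.length_singleton, Nat.sub_self] at hi hj
  exact ⟨by rw [hi], hj.symm.trans hi⟩

lemma RealizedPath.append_cons {i j k : ℕ} {L R : List ℕ}
    (hL : RealizedPath n T i k (L ++ [k])) (hR : RealizedPath n T k j (k :: R))
    (hL0 : L ≠ []) (hR0 : R ≠ []) :
    RealizedPath n (T ++ [(i, j, k)]) i j (L ++ k :: R) := by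
  obtain ⟨-, hLmem, hLi, -, hLreal⟩ := hL
  obtain ⟨-, hRmem, -, hRj, hRreal⟩ := hR
  rw [getD_zero_append _ _ hL0] at hLi
  refine ⟨by simp, ?_, by rwa [getD_zero_append _ _ hL0], ?_,
    hLreal.append_cons hRreal hL0 hR0 hLi hRj⟩
  · intro v hv
    rcases List.mem_append.mp hv with hv | hv
    · exact hLmem v (List.mem_append_left _ hv)
    · exact hRmem v hv
  · rwa [getD_length_sub_one_append _ _ (List.cons_ne_nil k R)]

lemma RealizedPath.exists_join {i j k : ℕ} {P Q : List ℕ} (hP : RealizedPath n T i k P)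
    (hQ : RealizedPath n T k j Q) :
    ∃ S, RealizedPath n (T ++ [(i, j, k)]) i j S ∧
      pathWeight A S = pathWeight A P + pathWeight A Q := by
  -- `Realized.step` only splits at an interior vertex, so a one-vertex half is absorbed instead.
  by_cases hP2 : P.length < 2
  · obtain ⟨rfl, rfl⟩ := hP.eq_singleton hP2
    exact ⟨Q, hQ.append_right _, by simp [pathWeight]⟩
  by_cases hQ2 : Q.length < 2
  · obtain ⟨rfl, rfl⟩ := hQ.eq_singleton hQ2
    exact ⟨P, hP.append_right _, by simp [pathWeight]⟩
  obtain ⟨L, rfl⟩ : ∃ L, P = L ++ [k] := ⟨_, eq_dropLast_append_of_getD hP.1 hP.2.2.2.1⟩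
  obtain ⟨k', R, rfl⟩ := List.exists_cons_of_ne_nil hQ.1
  obtain rfl : k = k' := hQ.2.2.1.symm
  have hL0 : L ≠ [] := by rintro rfl; simp at hP2
  have hR0 : R ≠ [] := by rintro rfl; simp at hQ2
  exact ⟨L ++ k :: R, hP.append_cons hQ hL0 hR0, pathWeight_append_cons L k R⟩

theorem exists_realizedPath_pathWeight_eq_relaxAll
    (hT : ∀ t ∈ T, 1 ≤ t.1 ∧ t.1 ≤ n ∧ 1 ≤ t.2.1 ∧ t.2.1 ≤ n ∧ 1 ≤ t.2.2 ∧ t.2.2 ≤ n)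
    {i j : ℕ} (hi1 : 1 ≤ i) (hin : i ≤ n) (hj1 : 1 ≤ j) (hjn : j ≤ n) :
    ∃ P, RealizedPath n T i j P ∧ pathWeight A P = relaxAll A T i j := by
  induction T using List.reverseRecOn generalizing i j with
  | nil =>
    refine ⟨[i, j], ⟨by simp, ?_, rfl, rfl, .base _ _ (by simp)⟩, by simp [pathWeight, relaxAll]⟩
    simp only [List.mem_cons, List.not_mem_nil, or_false]
    rintro v (rfl | rfl) <;> omega
  | append_singleton T t ih =>
    have hT' := fun s hs => hT s (List.mem_append_left _ hs)
    obtain ⟨a, b, k⟩ := t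
    obtain ⟨-, -, -, -, hk1, hkn⟩ := hT (a, b, k) (by simp)
    obtain ⟨P, hP, hPw⟩ := ih hT' hi1 hin hj1 hjn
    rw [relaxAll_concat]
    by_cases hij : i = a ∧ j = b
    · obtain ⟨rfl, rfl⟩ := hij
      rw [relaxStep_apply_self]
      rcases min_choice (relaxAll A T i j) (relaxAll A T i k + relaxAll A T k j) with h | h
      · exact ⟨P, hP.append_right _, by rw [h, hPw]⟩
      · obtain ⟨Q₁, hQ₁, hQ₁w⟩ := ih hT' hi1 hin hk1 hkn
        obtain ⟨Q₂, hQ₂, hQ₂w⟩ := ih hT' hk1 hkn hj1 hjn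
        obtain ⟨S, hS, hSw⟩ := hQ₁.exists_join (A := A) hQ₂
        exact ⟨S, hS, by rw [h, hSw, hQ₁w, hQ₂w]⟩
    · exact ⟨P, hP.append_right _, by rw [relaxStep_apply_of_ne hij, hPw]⟩

end RealizedPath

theorem stmt14_general (n : ℕ) (A : ℕ → ℕ → WithTop ℤ) (hA : ∀ i, A i i = 0)
    (T : List (ℕ × ℕ × ℕ))
    (hT : ∀ t ∈ T, 1 ≤ t.1 ∧ t.1 ≤ n ∧ 1 ≤ t.2.1 ∧ t.2.1 ≤ n ∧
      1 ≤ t.2.2 ∧ t.2.2 ≤ n)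
    (i j : ℕ) (hi1 : 1 ≤ i) (hin : i ≤ n) (hj1 : 1 ≤ j) (hjn : j ≤ n) :
    IsLeast {c | ∃ P : List ℕ, P ≠ [] ∧ (∀ v ∈ P, 1 ≤ v ∧ v ≤ n) ∧
        P.getD 0 0 = i ∧ P.getD (P.length - 1) 0 = j ∧ Realized T P ∧
        pathWeight A P = c}
      (relaxAll A T i j) := by
  constructor
  · obtain ⟨P, ⟨hne, hmem, hi, hj, hreal⟩, hw⟩ :=
      exists_realizedPath_pathWeight_eq_relaxAll (A := A) hT hi1 hin hj1 hjn
    exact ⟨P, hne, hmem, hi, hj, hreal, hw⟩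
  · rintro c ⟨P, -, -, rfl, rfl, hreal, rfl⟩
    exact hreal.relaxAll_le_pathWeight hA

/-- Relaxation–realization correspondence: after applying the relaxations of a
sequence `T` (whose tuples have entries in `[1,n]`) to the adjacency matrix of a
graph with no negative cycles, each entry `(i,j)` is the minimum total weight over
all paths from `i` to `j` realized by `T`. -/
theorem stmt14 (n : ℕ) (A : ℕ → ℕ → WithTop ℤ) (hA : ∀ i, A i i = 0)
    (hcyc : NoNegCycle n A) (T : List (ℕ × ℕ × ℕ))
    (hT : ∀ t ∈ T, 1 ≤ t.1 ∧ t.1 ≤ n ∧ 1 ≤ t.2.1 ∧ t.2.1 ≤ n ∧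
      1 ≤ t.2.2 ∧ t.2.2 ≤ n)
    (i j : ℕ) (hi1 : 1 ≤ i) (hin : i ≤ n) (hj1 : 1 ≤ j) (hjn : j ≤ n) :
    IsLeast {c | ∃ P : List ℕ, P ≠ [] ∧ (∀ v ∈ P, 1 ≤ v ∧ v ≤ n) ∧
        P.getD 0 0 = i ∧ P.getD (P.length - 1) 0 = j ∧ Realized T P ∧
        pathWeight A P = c}
      (relaxAll A T i j) :=
  stmt14_general n A hA T hT i j hi1 hin hj1 hjn
end
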